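/- arXiv:2404.11083 — 4 statements merged into one kernel-verified Lean document; each statement's English description precedes it below -/
import Mathlib

section
/- Fix an integer d ≥ 1, an integer m ≥ 1, pairwise distinct points y_1,…,y_m ∈ [0,1]^d ∖ {0}, and real numbers β_0, β_1,…,β_m. Then the function f : [0,1]^d → ℝ defined by f(x) = β_0 + Σ_{k=1}^m β_k 1_{[y_k,1]}(x) satisfies ‖f‖_v = |β_0| + Σ_{k=1}^m |β_k|. -/
open MeasureTheory Filter Set
open scoped ENNReal NNReal

noncomputable section

namespace HAL

/-- The quadrant `Q_a(u)` inside the unit cube. -/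
def quadrant (d : ℕ) (a : Fin d → Bool) (u : Fin d → ℝ) : Set (Fin d → ℝ) :=
  {y | ∀ k, if a k then u k ≤ y k ∧ y k ≤ 1 else 0 ≤ y k ∧ y k < u k}

/-- Multivariate càdlàg on the unit cube. -/
def IsCadlag (d : ℕ) (f : (Fin d → ℝ) → ℝ) : Prop :=
  ∀ u ∈ Set.Icc (0 : Fin d → ℝ) 1, ∀ a : Fin d → Bool,
    ∀ x : ℕ → (Fin d → ℝ), (∀ n, x n ∈ quadrant d a u) →
      Filter.Tendsto x Filter.atTop (nhds u) →
      ∃ L : ℝ, Filter.Tendsto (fun n => f (x n)) Filter.atTop (nhds L) ∧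
        ((∀ k, a k = true) → L = f u)

/-- A grid partition of the face `(0_s, 1_s]` (coordinates outside `s` fixed at `0`). -/
structure SectionGrid (d : ℕ) (s : Finset (Fin d)) where
  L : Fin d → ℕ
  t : Fin d → ℕ → ℝ
  Lpos : ∀ k, 0 < L k
  Lout : ∀ k, k ∉ s → L k = 1
  t0 : ∀ k, t k 0 = 0
  tlast : ∀ k, t k (L k) = 1
  tmono : ∀ k, ∀ i, i < L k → t k i < t k (i + 1)

/-- The vertex of the box indexed by `j` corresponding to the subset `e ⊆ s`. -/
def gridVertex {d : ℕ} {s : Finset (Fin d)} (G : SectionGrid d s) (j : Fin d → ℕ)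
    (e : Finset (Fin d)) : Fin d → ℝ :=
  fun k => if k ∈ s then (if k ∈ e then G.t k (j k) else G.t k (j k - 1)) else 0

/-- The quasi-volume `Δ(f_s; A)` of the box of the grid `G` indexed by `j`. -/
def boxQuasiVolume {d : ℕ} (f : (Fin d → ℝ) → ℝ) {s : Finset (Fin d)}
    (G : SectionGrid d s) (j : Fin d → ℕ) : ℝ :=
  ∑ e ∈ s.powerset, (-1 : ℝ) ^ (s.card - e.card) * f (gridVertex G j e)

/-- `∑_{A ∈ P} |Δ(f_s; A)|` for the grid partition `G`. -/
def gridVariationSum {d : ℕ} (f : (Fin d → ℝ) → ℝ) {s : Finset (Fin d)}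
    (G : SectionGrid d s) : ℝ :=
  ∑ j ∈ Fintype.piFinset (fun k => Finset.Icc 1 (G.L k)), |boxQuasiVolume f G j|

/-- The Vitali variation `V(f_s)` of the section `f_s` of `f`. -/
def sectionVitali (d : ℕ) (f : (Fin d → ℝ) → ℝ) (s : Finset (Fin d)) : ℝ≥0∞ :=
  ⨆ G : SectionGrid d s, ENNReal.ofReal (gridVariationSum f G)

/-- The sectional variation norm `‖f‖_v = |f(0)| + ∑_{∅ ≠ s} V(f_s)`. -/
def svn (d : ℕ) (f : (Fin d → ℝ) → ℝ) : ℝ≥0∞ :=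
  ENNReal.ofReal |f 0| +
    ∑ s ∈ (Finset.univ : Finset (Fin d)).powerset.erase ∅, sectionVitali d f s

/-- `D^d_M`: càdlàg functions with sectional variation norm at most `M`. -/
def Dset (d : ℕ) (M : ℝ) : Set ((Fin d → ℝ) → ℝ) :=
  {f | IsCadlag d f ∧ svn d f ≤ ENNReal.ofReal M}

/-- The indicator `1_{[y, 1]}` of the upper box `[y, 1]`. -/
def upperBoxIndicator (d : ℕ) (y : Fin d → ℝ) : (Fin d → ℝ) → ℝ :=
  (Set.Icc y 1).indicator (fun _ => (1 : ℝ))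

/-- The span of `F^d = {1_{[y,1]} : y ∈ [0,1]^d}`. -/
def spanF (d : ℕ) : Submodule ℝ ((Fin d → ℝ) → ℝ) :=
  Submodule.span ℝ {g | ∃ y ∈ Set.Icc (0 : Fin d → ℝ) 1, g = upperBoxIndicator d y}

/-- `R^d_M`: elements of the span of upper-box indicators with `‖·‖_v ≤ M`. -/
def Rset (d : ℕ) (M : ℝ) : Set ((Fin d → ℝ) → ℝ) :=
  {f | f ∈ spanF d ∧ svn d f ≤ ENNReal.ofReal M}

end HAL

namespace HALProof
open HAL Finset
open scoped Classical

variable {d : ℕ} {s : Finset (Fin d)}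

lemma grid_le (G : SectionGrid d s) (k : Fin d) :
    ∀ {i i' : ℕ}, i ≤ i' → i' ≤ G.L k → G.t k i ≤ G.t k i' := by
  intro i i' h h'
  induction i' with
  | zero => simp [Nat.le_zero.mp h]
  | succ n ih =>
    rcases Nat.lt_or_ge i (n + 1) with hlt | hge
    · exact le_trans (ih (Nat.lt_succ_iff.mp hlt) (by omega))
        (le_of_lt (G.tmono k n (by omega)))
    · have : i = n + 1 := le_antisymm h hge
      simp [this]

lemma grid_lt (G : SectionGrid d s) (k : Fin d) {i i' : ℕ} (h : i < i') (h' : i' ≤ G.L k) :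
    G.t k i < G.t k i' := by
  have h1 : G.t k i ≤ G.t k (i' - 1) := grid_le G k (by omega) (by omega)
  have h2 : G.t k (i' - 1) < G.t k (i' - 1 + 1) := G.tmono k _ (by omega)
  have : i' - 1 + 1 = i' := by omega
  rw [this] at h2
  exact lt_of_le_of_lt h1 h2

lemma grid_nonneg (G : SectionGrid d s) (k : Fin d) {i : ℕ} (h : i ≤ G.L k) :
    0 ≤ G.t k i := by
  have := grid_le G k (Nat.zero_le i) h
  rwa [G.t0 k] at this

lemma grid_le_one (G : SectionGrid d s) (k : Fin d) {i : ℕ} (h : i ≤ G.L k) :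
    G.t k i ≤ 1 := by
  have := grid_le G k h le_rfl
  rwa [G.tlast k] at this

lemma box_unique (G : SectionGrid d s) (k : Fin d) {v : ℝ} {i i' : ℕ}
    (hi1 : 1 ≤ i) (hiL : i ≤ G.L k) (hi1' : 1 ≤ i') (hiL' : i' ≤ G.L k)
    (h1 : G.t k (i - 1) < v) (h2 : v ≤ G.t k i)
    (h1' : G.t k (i' - 1) < v) (h2' : v ≤ G.t k i') : i = i' := by
  by_contra hne
  rcases Nat.lt_or_ge i i' with h | h
  · have : G.t k i ≤ G.t k (i' - 1) := grid_le G k (by omega) (by omega)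
    linarith
  · have hlt : i' < i := by omega
    have : G.t k i' ≤ G.t k (i - 1) := grid_le G k (by omega) (by omega)
    linarith

def InBox (G : SectionGrid d s) (j : Fin d → ℕ) (y : Fin d → ℝ) : Prop :=
  (∀ k ∈ s, G.t k (j k - 1) < y k ∧ y k ≤ G.t k (j k)) ∧ ∀ k ∉ s, y k = 0

lemma neg_one_pow_sub (a b : ℕ) (h : b ≤ a) : (-1 : ℝ) ^ (a - b) = (-1) ^ a * (-1) ^ b := by
  have hb : ((-1 : ℝ)) ^ b * (-1) ^ b = 1 := by
    rw [← pow_add]; exact Even.neg_one_pow ⟨b, rfl⟩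
  calc (-1 : ℝ) ^ (a - b) = (-1) ^ (a - b) * ((-1) ^ b * (-1) ^ b) := by rw [hb, mul_one]
    _ = ((-1) ^ (a - b) * (-1) ^ b) * (-1) ^ b := by ring
    _ = (-1) ^ a * (-1) ^ b := by rw [← pow_add]; congr 2; omega

lemma qv_const (hs : s.Nonempty) (G : SectionGrid d s) (j : Fin d → ℕ) (c : ℝ) :
    boxQuasiVolume (fun _ => c) G j = 0 := by
  unfold boxQuasiVolume
  have hterm : ∀ e ∈ s.powerset, (-1 : ℝ) ^ (s.card - e.card) * c
      = ((-1) ^ s.card * c) * (-1) ^ e.card := by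
    intro e he
    rw [neg_one_pow_sub _ _ (Finset.card_le_card (mem_powerset.mp he))]
    ring
  rw [Finset.sum_congr rfl hterm, ← Finset.mul_sum]
  have hz : ∑ e ∈ s.powerset, ((-1 : ℝ)) ^ e.card = 0 := by
    exact_mod_cast congrArg (fun z : ℤ => (z : ℝ))
      (Finset.sum_powerset_neg_one_pow_card_of_nonempty hs)
  rw [hz, mul_zero]

lemma ite_mul_ite_mul_ite {A B C : Prop} {dA : Decidable A} {dB : Decidable B}
    {dC : Decidable C} {dABC : Decidable (A ∧ B ∧ C)} :
    (@ite ℝ (A ∧ B ∧ C) dABC 1 0)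
      = (@ite ℝ A dA 1 0) * ((@ite ℝ B dB 1 0) * (@ite ℝ C dC 1 0)) := by
  by_cases hA : A <;> by_cases hB : B <;> by_cases hC : C <;>
    simp [hA, hB, hC]

lemma ite_and_mul {A A' P : Prop} {dA : Decidable A} {dP : Decidable P}
    {dPA : Decidable (P ∧ A')} (h : A ↔ A') :
    (@ite ℝ A dA 1 0) * (@ite ℝ P dP 1 0) = @ite ℝ (P ∧ A') dPA 1 0 := by
  by_cases hA : A <;> by_cases hP : P <;>
    simp [← h, hA, hP]

lemma ite_inst_congr {P : Prop} {d1 d2 : Decidable P} {a b : ℝ} :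
    @ite ℝ P d1 a b = @ite ℝ P d2 a b := by
  congr 1

lemma qv_indicator (G : SectionGrid d s) (j : Fin d → ℕ)
    (hj : ∀ k, 1 ≤ j k ∧ j k ≤ G.L k) {y : Fin d → ℝ}
    (hy : y ∈ Set.Icc (0 : Fin d → ℝ) 1) :
    boxQuasiVolume (upperBoxIndicator d y) G j = if InBox G j y then 1 else 0 := by
  -- Step 1: value of the indicator at each vertex
  have hvert : ∀ e ∈ s.powerset, upperBoxIndicator d y (gridVertex G j e)
      = (if ∀ k, k ∉ s → y k ≤ 0 then (1 : ℝ) else 0)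
        * ((∏ k ∈ e, if y k ≤ G.t k (j k) then (1 : ℝ) else 0)
          * ∏ k ∈ s \ e, if y k ≤ G.t k (j k - 1) then (1 : ℝ) else 0) := by
    intro e he
    have hes : e ⊆ s := mem_powerset.mp he
    have hmem : gridVertex G j e ∈ Set.Icc y 1 ↔
        ((∀ k, k ∉ s → y k ≤ 0) ∧ (∀ k ∈ e, y k ≤ G.t k (j k))
          ∧ (∀ k ∈ s \ e, y k ≤ G.t k (j k - 1))) := by
      constructor
      · rintro ⟨hyle, -⟩
        refine ⟨fun k hk => ?_, fun k hk => ?_, fun k hk => ?_⟩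
        · simpa [gridVertex, hk] using hyle k
        · simpa [gridVertex, hes hk, hk] using hyle k
        · rw [Finset.mem_sdiff] at hk
          simpa [gridVertex, hk.1, hk.2] using hyle k
      · rintro ⟨h1, h2, h3⟩
        constructor
        · intro k
          by_cases hks : k ∈ s
          · by_cases hke : k ∈ e
            · simpa [gridVertex, hks, hke] using h2 k hke
            · simpa [gridVertex, hks, hke] using h3 k (mem_sdiff.mpr ⟨hks, hke⟩)
          · simpa [gridVertex, hks] using h1 k hks
        · intro k
          show gridVertex G j e k ≤ 1
          unfold gridVertex
          split
          · split
            · exact grid_le_one G k (hj k).2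
            · exact grid_le_one G k (by have := (hj k).2; omega)
          · norm_num
    rw [upperBoxIndicator, Set.indicator_apply, Finset.prod_boole, Finset.prod_boole,
      if_congr hmem rfl rfl]
    exact ite_mul_ite_mul_ite
  -- Step 2: expand via prod_add
  have hC : ∀ k ∈ s, ((if y k ≤ G.t k (j k) then (1 : ℝ) else 0)
      + -(if y k ≤ G.t k (j k - 1) then (1 : ℝ) else 0))
      = if G.t k (j k - 1) < y k ∧ y k ≤ G.t k (j k) then (1 : ℝ) else 0 := by
    intro k hk
    have hle : G.t k (j k - 1) ≤ G.t k (j k) := grid_le G k (by omega) (hj k).2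
    by_cases ha : y k ≤ G.t k (j k - 1)
    · have hb : y k ≤ G.t k (j k) := ha.trans hle
      simp [ha, hb, not_lt.mpr ha]
    · by_cases hb : y k ≤ G.t k (j k) <;> simp [ha, hb, not_le.mp ha]
  have hexp : ∑ e ∈ s.powerset, (-1 : ℝ) ^ (s.card - e.card)
        * ((∏ k ∈ e, if y k ≤ G.t k (j k) then (1 : ℝ) else 0)
          * ∏ k ∈ s \ e, if y k ≤ G.t k (j k - 1) then (1 : ℝ) else 0)
      = if (∀ k ∈ s, G.t k (j k - 1) < y k ∧ y k ≤ G.t k (j k)) then (1 : ℝ) else 0 := by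
    have H := Finset.prod_add (fun k => if y k ≤ G.t k (j k) then (1 : ℝ) else 0)
      (fun k => -(if y k ≤ G.t k (j k - 1) then (1 : ℝ) else 0)) s
    rw [Finset.prod_congr rfl hC, Finset.prod_boole] at H
    refine Eq.trans (Eq.trans (Finset.sum_congr rfl ?_) H.symm) ite_inst_congr
    intro e he
    have hes : e ⊆ s := mem_powerset.mp he
    have hneg : ∏ k ∈ s \ e, (-(if y k ≤ G.t k (j k - 1) then (1 : ℝ) else 0))
        = (-1 : ℝ) ^ (s.card - e.card)
          * ∏ k ∈ s \ e, (if y k ≤ G.t k (j k - 1) then (1 : ℝ) else 0) := by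
      rw [← card_sdiff_of_subset hes]
      calc ∏ k ∈ s \ e, (-(if y k ≤ G.t k (j k - 1) then (1 : ℝ) else 0))
          = ∏ k ∈ s \ e, ((-1) * (if y k ≤ G.t k (j k - 1) then (1 : ℝ) else 0)) :=
            Finset.prod_congr rfl (fun k _ => neg_eq_neg_one_mul _)
        _ = _ := by rw [Finset.prod_mul_distrib, Finset.prod_const]
    rw [hneg]
    ring
  -- Step 3: put together
  unfold boxQuasiVolume
  have h4 : ∑ e ∈ s.powerset, (-1 : ℝ) ^ (s.card - e.card)
        * upperBoxIndicator d y (gridVertex G j e)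
      = ∑ e ∈ s.powerset, (-1 : ℝ) ^ (s.card - e.card)
        * ((if ∀ k, k ∉ s → y k ≤ 0 then (1 : ℝ) else 0)
          * ((∏ k ∈ e, if y k ≤ G.t k (j k) then (1 : ℝ) else 0)
            * ∏ k ∈ s \ e, if y k ≤ G.t k (j k - 1) then (1 : ℝ) else 0)) :=
    Finset.sum_congr rfl (fun e he => by rw [hvert e he])
  rw [h4]
  have hpull : ∀ e ∈ s.powerset, (-1 : ℝ) ^ (s.card - e.card)
      * ((if ∀ k, k ∉ s → y k ≤ 0 then (1 : ℝ) else 0)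
        * ((∏ k ∈ e, if y k ≤ G.t k (j k) then (1 : ℝ) else 0)
          * ∏ k ∈ s \ e, if y k ≤ G.t k (j k - 1) then (1 : ℝ) else 0))
      = (if ∀ k, k ∉ s → y k ≤ 0 then (1 : ℝ) else 0)
        * ((-1 : ℝ) ^ (s.card - e.card)
          * ((∏ k ∈ e, if y k ≤ G.t k (j k) then (1 : ℝ) else 0)
            * ∏ k ∈ s \ e, if y k ≤ G.t k (j k - 1) then (1 : ℝ) else 0)) := by
    intro e _; ring
  rw [Finset.sum_congr rfl hpull, ← Finset.mul_sum, hexp]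
  have hzero : (∀ k, k ∉ s → y k ≤ 0) ↔ (∀ k, k ∉ s → y k = 0) := by
    constructor
    · intro h k hk; exact le_antisymm (h k hk) (hy.1 k)
    · intro h k hk; exact le_of_eq (h k hk)
  unfold InBox
  exact ite_and_mul hzero

lemma getElem_idx_congr {l : List ℝ} {i j : ℕ} (h : i = j) (hi : i < l.length) :
    l[i]'hi = l[j]'(h ▸ hi) := by subst h; rfl

lemma exists_grid (s : Finset (Fin d)) (T : Fin d → Finset ℝ)
    (h0 : ∀ k, (0 : ℝ) ∈ T k) (h1 : ∀ k, (1 : ℝ) ∈ T k)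
    (hsub : ∀ k, ∀ v ∈ T k, v ∈ Set.Icc (0 : ℝ) 1)
    (hout : ∀ k, k ∉ s → (T k).card = 2) :
    ∃ G : SectionGrid d s, ∀ k, ∀ v ∈ T k, ∃ i, i ≤ G.L k ∧ G.t k i = v := by
  have hcard : ∀ k, 2 ≤ (T k).card := fun k =>
    Finset.one_lt_card.mpr ⟨0, h0 k, 1, h1 k, by norm_num⟩
  have hlen : ∀ k, ((T k).sort (· ≤ ·)).length = (T k).card := fun k => Finset.length_sort _
  have hne : ∀ k, (T k).Nonempty := fun k => ⟨0, h0 k⟩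
  have hmin : ∀ k, (T k).min' (hne k) = 0 := fun k =>
    le_antisymm (Finset.min'_le _ _ (h0 k))
      (Finset.le_min' _ _ _ (fun v hv => (hsub k v hv).1))
  have hmax : ∀ k, (T k).max' (hne k) = 1 := fun k =>
    le_antisymm (Finset.max'_le _ _ _ (fun v hv => (hsub k v hv).2))
      (Finset.le_max' _ _ (h1 k))
  refine ⟨⟨fun k => (T k).card - 1, fun k i => ((T k).sort (· ≤ ·)).getD i 1,
    fun k => by show 0 < (T k).card - 1; have := hcard k; omega,
    fun k hk => by show (T k).card - 1 = 1; have := hout k hk; omega,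
    ?_, ?_, ?_⟩, ?_⟩
  · intro k
    show ((T k).sort (· ≤ ·)).getD 0 1 = 0
    have hpos : 0 < ((T k).sort (· ≤ ·)).length := by rw [hlen]; have := hcard k; omega
    rw [List.getD_eq_getElem _ _ hpos]
    have := Finset.sorted_zero_eq_min'_aux (T k) hpos (hne k)
    simp only [List.get_eq_getElem] at this
    rw [this]
    exact hmin k
  · intro k
    show ((T k).sort (· ≤ ·)).getD ((T k).card - 1) 1 = 1
    have hlt : (T k).card - 1 < ((T k).sort (· ≤ ·)).length := by
      rw [hlen]; have := hcard k; omega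
    rw [List.getD_eq_getElem _ _ hlt]
    have hlast := Finset.sorted_last_eq_max'_aux (T k)
      (by have := hcard k; rw [hlen]; omega) (hne k)
    rw [getElem_idx_congr (show (T k).card - 1 = ((T k).sort (· ≤ ·)).length - 1 by rw [hlen]) hlt, hlast]
    exact hmax k
  · intro k i hi
    have hi' : i < (T k).card - 1 := hi
    have hi1 : i < ((T k).sort (· ≤ ·)).length := by rw [hlen]; omega
    have hi2 : i + 1 < ((T k).sort (· ≤ ·)).length := by rw [hlen]; omega
    show ((T k).sort (· ≤ ·)).getD i 1 < ((T k).sort (· ≤ ·)).getD (i + 1) 1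
    rw [List.getD_eq_getElem _ _ hi1, List.getD_eq_getElem _ _ hi2]
    exact (Finset.sortedLT_sort (T k)).getElem_lt_getElem_of_lt
      (show i < i + 1 by omega)
  · intro k v hv
    have hvs : v ∈ (T k).sort (· ≤ ·) := (Finset.mem_sort _).mpr hv
    obtain ⟨⟨i, hi⟩, hget⟩ := List.mem_iff_get.mp hvs
    refine ⟨i, show i ≤ (T k).card - 1 by rw [hlen] at hi; omega, ?_⟩
    show ((T k).sort (· ≤ ·)).getD i 1 = v
    rw [List.getD_eq_getElem _ _ hi]
    exact hget

variable {m : ℕ}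

lemma qv_linear (G : SectionGrid d s) (j : Fin d → ℕ) (β₀ : ℝ) (β : Fin m → ℝ)
    (g : Fin m → (Fin d → ℝ) → ℝ) :
    boxQuasiVolume (fun x => β₀ + ∑ k, β k * g k x) G j
      = boxQuasiVolume (fun _ => β₀) G j + ∑ k, β k * boxQuasiVolume (g k) G j := by
  unfold boxQuasiVolume
  simp only [mul_add, Finset.sum_add_distrib, Finset.mul_sum]
  congr 1
  rw [Finset.sum_comm]
  apply Finset.sum_congr rfl
  intro k _
  apply Finset.sum_congr rfl
  intro e _
  ring

lemma qv_f (hs : s.Nonempty) (G : SectionGrid d s) (j : Fin d → ℕ)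
    (hj : ∀ k, 1 ≤ j k ∧ j k ≤ G.L k)
    (y : Fin m → Fin d → ℝ) (hy : ∀ k, y k ∈ Set.Icc (0 : Fin d → ℝ) 1)
    (β₀ : ℝ) (β : Fin m → ℝ) :
    boxQuasiVolume (fun x => β₀ + ∑ k, β k * upperBoxIndicator d (y k) x) G j
      = ∑ k, if InBox G j (y k) then β k else 0 := by
  rw [qv_linear, qv_const hs, zero_add]
  apply Finset.sum_congr rfl
  intro k _
  rw [qv_indicator G j hj (hy k)]
  split <;> simp

lemma mem_pi {G : SectionGrid d s} {j : Fin d → ℕ}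
    (h : j ∈ Fintype.piFinset (fun k => Finset.Icc 1 (G.L k))) :
    ∀ k, 1 ≤ j k ∧ j k ≤ G.L k := by
  intro k
  have := Fintype.mem_piFinset.mp h k
  simpa [Finset.mem_Icc] using this

lemma InBox_supp (G : SectionGrid d s) (j : Fin d → ℕ)
    (hj : ∀ k, 1 ≤ j k ∧ j k ≤ G.L k) {z : Fin d → ℝ} (h : InBox G j z) :
    Finset.univ.filter (fun i => z i ≠ 0) = s := by
  ext i
  simp only [Finset.mem_filter, Finset.mem_univ, true_and]
  constructor
  · intro hz
    by_contra hi
    exact hz (h.2 i hi)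
  · intro hi
    have h1 := (h.1 i hi).1
    have h0 : 0 ≤ G.t i (j i - 1) := grid_nonneg G i (by have := (hj i).2; omega)
    exact ne_of_gt (lt_of_le_of_lt h0 h1)

lemma InBox_unique (G : SectionGrid d s) {j j' : Fin d → ℕ}
    (hj : ∀ k, 1 ≤ j k ∧ j k ≤ G.L k) (hj' : ∀ k, 1 ≤ j' k ∧ j' k ≤ G.L k)
    {z : Fin d → ℝ} (h : InBox G j z) (h' : InBox G j' z) : j = j' := by
  funext k
  by_cases hk : k ∈ s
  · exact box_unique G k (hj k).1 (hj k).2 (hj' k).1 (hj' k).2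
      (h.1 k hk).1 (h.1 k hk).2 (h'.1 k hk).1 (h'.1 k hk).2
  · have hL := G.Lout k hk
    have h1 := hj k
    have h2 := hj' k
    omega

lemma upper_bound (hs : s.Nonempty)
    (y : Fin m → Fin d → ℝ) (hy : ∀ k, y k ∈ Set.Icc (0 : Fin d → ℝ) 1)
    (β₀ : ℝ) (β : Fin m → ℝ) (G : SectionGrid d s) :
    gridVariationSum (fun x => β₀ + ∑ k, β k * upperBoxIndicator d (y k) x) G
      ≤ ∑ k ∈ Finset.univ.filter
          (fun k => Finset.univ.filter (fun i => y k i ≠ 0) = s), |β k| := by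
  set Ks := Finset.univ.filter
    (fun k => Finset.univ.filter (fun i => y k i ≠ 0) = s) with hKs
  set P := Fintype.piFinset (fun k => Finset.Icc 1 (G.L k)) with hP
  unfold gridVariationSum
  calc ∑ j ∈ P, |boxQuasiVolume (fun x => β₀ + ∑ k, β k * upperBoxIndicator d (y k) x) G j|
      = ∑ j ∈ P, |∑ k, if InBox G j (y k) then β k else 0| :=
        Finset.sum_congr rfl (fun j hj => by rw [qv_f hs G j (mem_pi hj) y hy β₀ β])
    _ ≤ ∑ j ∈ P, ∑ k, |if InBox G j (y k) then β k else 0| :=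
        Finset.sum_le_sum (fun j _ => Finset.abs_sum_le_sum_abs _ _)
    _ = ∑ j ∈ P, ∑ k, (if InBox G j (y k) then |β k| else 0) := by
        apply Finset.sum_congr rfl; intro j _
        apply Finset.sum_congr rfl; intro k _
        split <;> simp
    _ = ∑ k, ∑ j ∈ P, (if InBox G j (y k) then |β k| else 0) := Finset.sum_comm
    _ = ∑ k ∈ Ks, ∑ j ∈ P, (if InBox G j (y k) then |β k| else 0) := by
        symm
        apply Finset.sum_subset (Finset.subset_univ _)
        intro k _ hk
        apply Finset.sum_eq_zero
        intro j hjP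
        rw [if_neg]
        intro hIn
        exact hk (Finset.mem_filter.mpr ⟨Finset.mem_univ _, InBox_supp G j (mem_pi hjP) hIn⟩)
    _ ≤ ∑ k ∈ Ks, |β k| := by
        apply Finset.sum_le_sum
        intro k _
        rw [← Finset.sum_filter, Finset.sum_const]
        have hcard : (P.filter (fun j => InBox G j (y k))).card ≤ 1 := by
          apply Finset.card_le_one.mpr
          intro j1 h1 j2 h2
          rw [Finset.mem_filter] at h1 h2
          exact InBox_unique G (mem_pi h1.1) (mem_pi h2.1) h1.2 h2.2
        calc (P.filter (fun j => InBox G j (y k))).card • |β k|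
            ≤ 1 * |β k| := by
              rw [nsmul_eq_mul]
              exact mul_le_mul_of_nonneg_right (by exact_mod_cast hcard) (abs_nonneg _)
          _ = |β k| := one_mul _

lemma lower_bound (hs : s.Nonempty)
    (y : Fin m → Fin d → ℝ) (hy : ∀ k, y k ∈ Set.Icc (0 : Fin d → ℝ) 1)
    (hinj : Function.Injective y) (β₀ : ℝ) (β : Fin m → ℝ) :
    ∃ G : SectionGrid d s,
      gridVariationSum (fun x => β₀ + ∑ k, β k * upperBoxIndicator d (y k) x) G
        = ∑ k ∈ Finset.univ.filter
            (fun k => Finset.univ.filter (fun i => y k i ≠ 0) = s), |β k| := by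
  classical
  set Ks := Finset.univ.filter
    (fun k => Finset.univ.filter (fun i => y k i ≠ 0) = s) with hKs
  set T : Fin d → Finset ℝ := fun k =>
    insert 0 (insert 1 (if k ∈ s then Ks.image (fun a => y a k) else ∅)) with hT
  have h0 : ∀ k, (0 : ℝ) ∈ T k := fun k => Finset.mem_insert_self _ _
  have h1 : ∀ k, (1 : ℝ) ∈ T k := fun k =>
    Finset.mem_insert_of_mem (Finset.mem_insert_self _ _)
  have hsub : ∀ k, ∀ v ∈ T k, v ∈ Set.Icc (0 : ℝ) 1 := by
    intro k v hv
    rcases Finset.mem_insert.mp hv with rfl | hv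
    · exact ⟨le_rfl, zero_le_one⟩
    rcases Finset.mem_insert.mp hv with rfl | hv
    · exact ⟨zero_le_one, le_rfl⟩
    by_cases hk : k ∈ s
    · rw [if_pos hk] at hv
      obtain ⟨a, _, rfl⟩ := Finset.mem_image.mp hv
      exact ⟨(hy a).1 k, (hy a).2 k⟩
    · rw [if_neg hk] at hv
      exact absurd hv (Finset.notMem_empty _)
  have hout : ∀ k, k ∉ s → (T k).card = 2 := by
    intro k hk
    rw [hT]
    simp only [if_neg hk]
    rw [Finset.card_insert_of_notMem (by simp), Finset.card_insert_of_notMem (by simp)]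
    simp
  obtain ⟨G, hGsurj⟩ := exists_grid s T h0 h1 hsub hout
  have hzero_out : ∀ a ∈ Ks, ∀ k, k ∉ s → y a k = 0 := by
    intro a ha k hk
    have hsupp := (Finset.mem_filter.mp ha).2
    by_contra hne
    exact hk (hsupp ▸ Finset.mem_filter.mpr ⟨Finset.mem_univ _, hne⟩)
  have hval : ∀ a ∈ Ks, ∀ k ∈ s, ∃ i, 1 ≤ i ∧ i ≤ G.L k ∧ G.t k i = y a k := by
    intro a ha k hk
    have hmemT : y a k ∈ T k := by
      rw [hT]
      refine Finset.mem_insert_of_mem (Finset.mem_insert_of_mem ?_)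
      rw [if_pos hk]
      exact Finset.mem_image.mpr ⟨a, ha, rfl⟩
    obtain ⟨i, hiL, hti⟩ := hGsurj k _ hmemT
    have hsupp : Finset.univ.filter (fun i => y a i ≠ 0) = s := (Finset.mem_filter.mp ha).2
    have hne : y a k ≠ 0 := by
      have : k ∈ Finset.univ.filter (fun i => y a i ≠ 0) := hsupp ▸ hk
      exact (Finset.mem_filter.mp this).2
    have hpos : 0 < y a k := lt_of_le_of_ne ((hy a).1 k) (Ne.symm hne)
    refine ⟨i, ?_, hiL, hti⟩
    rcases Nat.eq_zero_or_pos i with rfl | h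
    · rw [G.t0 k] at hti
      exact absurd hti (ne_of_lt hpos)
    · exact h
  have hbox : ∀ a ∈ Ks, ∃ j ∈ Fintype.piFinset (fun k => Finset.Icc 1 (G.L k)),
      InBox G j (y a) := by
    intro a ha
    have hval' : ∀ k, ∃ i, 1 ≤ i ∧ i ≤ G.L k ∧ (k ∈ s → G.t k i = y a k) := by
      intro k
      by_cases hk : k ∈ s
      · obtain ⟨i, hi1, hi2, hi3⟩ := hval a ha k hk
        exact ⟨i, hi1, hi2, fun _ => hi3⟩
      · exact ⟨1, le_rfl, G.Lpos k, fun h => absurd h hk⟩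
    choose i hi1 hiL hti using hval'
    refine ⟨i, ?_, ?_, ?_⟩
    · rw [Fintype.mem_piFinset]
      intro k
      rw [Finset.mem_Icc]
      exact ⟨hi1 k, hiL k⟩
    · intro k hk
      refine ⟨?_, le_of_eq (hti k hk).symm⟩
      have hlt : G.t k (i k - 1) < G.t k (i k) :=
        grid_lt G k (by have := hi1 k; omega) (hiL k)
      rw [hti k hk] at hlt
      exact hlt
    · intro k hk
      exact hzero_out a ha k hk
  have hsep : ∀ j : Fin d → ℕ, (∀ k, 1 ≤ j k ∧ j k ≤ G.L k) → ∀ a ∈ Ks, ∀ b ∈ Ks,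
      InBox G j (y a) → InBox G j (y b) → a = b := by
    intro j hj a ha b hb hIa hIb
    by_contra hab
    have hyab : y a ≠ y b := fun h => hab (hinj h)
    obtain ⟨k, hk⟩ := Function.ne_iff.mp hyab
    have hks : k ∈ s := by
      by_contra hks
      exact hk ((hzero_out a ha k hks).trans (hzero_out b hb k hks).symm)
    obtain ⟨ia, hia1, hiaL, hta⟩ := hval a ha k hks
    obtain ⟨ib, hib1, hibL, htb⟩ := hval b hb k hks
    have h1 := hIa.1 k hks
    have h2 := hIb.1 k hks
    have hja : ia = j k := box_unique G k hia1 hiaL (hj k).1 (hj k).2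
      (by rw [← hta]; exact grid_lt G k (by omega) hiaL)
      (le_of_eq hta.symm) h1.1 h1.2
    have hjb : ib = j k := box_unique G k hib1 hibL (hj k).1 (hj k).2
      (by rw [← htb]; exact grid_lt G k (by omega) hibL)
      (le_of_eq htb.symm) h2.1 h2.2
    apply hk
    rw [← hta, ← htb, hja, hjb]
  refine ⟨G, ?_⟩
  unfold gridVariationSum
  set P := Fintype.piFinset (fun k => Finset.Icc 1 (G.L k)) with hPdef
  calc ∑ j ∈ P, |boxQuasiVolume (fun x => β₀ + ∑ k, β k * upperBoxIndicator d (y k) x) G j|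
      = ∑ j ∈ P, ∑ a ∈ Ks, (if InBox G j (y a) then |β a| else 0) := by
        apply Finset.sum_congr rfl
        intro j hjP
        have hj := mem_pi hjP
        rw [qv_f hs G j hj y hy β₀ β]
        have hrestrict : ∑ k, (if InBox G j (y k) then β k else 0)
            = ∑ k ∈ Ks, (if InBox G j (y k) then β k else 0) := by
          symm
          apply Finset.sum_subset (Finset.subset_univ _)
          intro k _ hk
          rw [if_neg]
          intro hIn
          exact hk (Finset.mem_filter.mpr ⟨Finset.mem_univ _, InBox_supp G j hj hIn⟩)
        rw [hrestrict]
        by_cases hex : ∃ a ∈ Ks, InBox G j (y a)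
        · obtain ⟨a, ha, hIa⟩ := hex
          rw [Finset.sum_eq_single_of_mem a ha
              (fun b hb hba => if_neg (fun hIb => hba (hsep j hj b hb a ha hIb hIa))),
            Finset.sum_eq_single_of_mem a ha
              (fun b hb hba => if_neg (fun hIb => hba (hsep j hj b hb a ha hIb hIa))),
            if_pos hIa, if_pos hIa]
        · push_neg at hex
          rw [Finset.sum_eq_zero (fun b hb => if_neg (hex b hb)),
            Finset.sum_eq_zero (fun b hb => if_neg (hex b hb)), abs_zero]
    _ = ∑ a ∈ Ks, ∑ j ∈ P, (if InBox G j (y a) then |β a| else 0) := Finset.sum_comm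
    _ = ∑ a ∈ Ks, |β a| := by
        apply Finset.sum_congr rfl
        intro a ha
        obtain ⟨j₀, hj₀P, hIn₀⟩ := hbox a ha
        rw [Finset.sum_eq_single_of_mem j₀ hj₀P
            (fun j hjP hne => if_neg
              (fun hIn => hne (InBox_unique G (mem_pi hjP) (mem_pi hj₀P) hIn hIn₀))),
          if_pos hIn₀]

lemma sectionVitali_eq (hs : s.Nonempty)
    (y : Fin m → Fin d → ℝ) (hy : ∀ k, y k ∈ Set.Icc (0 : Fin d → ℝ) 1)
    (hinj : Function.Injective y) (β₀ : ℝ) (β : Fin m → ℝ) :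
    sectionVitali d (fun x => β₀ + ∑ k, β k * upperBoxIndicator d (y k) x) s
      = ENNReal.ofReal
          (∑ k ∈ Finset.univ.filter
              (fun k => Finset.univ.filter (fun i => y k i ≠ 0) = s), |β k|) := by
  apply le_antisymm
  · exact iSup_le (fun G => ENNReal.ofReal_le_ofReal (upper_bound hs y hy β₀ β G))
  · obtain ⟨G, hG⟩ := lower_bound hs y hy hinj β₀ β
    exact le_iSup_of_le G (le_of_eq (congrArg ENNReal.ofReal hG.symm))

end HALProof

/-- the sectional variation norm of
`x ↦ β₀ + ∑ k, β k • 1_{[y k, 1]}(x)` with pairwise distinct `y k ∈ [0,1]^d \ {0}`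
equals `|β₀| + ∑ k |β k|`. -/
theorem svn_of_linear_combination_of_upper_box_indicators
    (d m : ℕ) (hd : 1 ≤ d) (hm : 1 ≤ m)
    (y : Fin m → Fin d → ℝ) (hy : ∀ k, y k ∈ Set.Icc (0 : Fin d → ℝ) 1)
    (hy0 : ∀ k, y k ≠ 0) (hinj : Function.Injective y)
    (β₀ : ℝ) (β : Fin m → ℝ) :
    HAL.svn d (fun x => β₀ + ∑ k, β k * HAL.upperBoxIndicator d (y k) x) =
      ENNReal.ofReal (|β₀| + ∑ k, |β k|) := by
  classical
  open HAL HALProof in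
  have hz : ∀ k, upperBoxIndicator d (y k) (0 : Fin d → ℝ) = 0 := by
    intro k
    rw [upperBoxIndicator, Set.indicator_apply, if_neg]
    rintro ⟨hle, -⟩
    exact hy0 k (le_antisymm hle (hy k).1)
  have hf0 : (fun x => β₀ + ∑ k, β k * HAL.upperBoxIndicator d (y k) x) (0 : Fin d → ℝ)
      = β₀ := by simp [hz]
  unfold HAL.svn
  rw [hf0]
  have hsect : ∀ s ∈ (Finset.univ : Finset (Fin d)).powerset.erase ∅,
      HAL.sectionVitali d (fun x => β₀ + ∑ k, β k * HAL.upperBoxIndicator d (y k) x) s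
        = ENNReal.ofReal (∑ k ∈ Finset.univ.filter
            (fun k => Finset.univ.filter (fun i => y k i ≠ 0) = s), |β k|) := by
    intro s hsmem
    have hne : s.Nonempty := Finset.nonempty_iff_ne_empty.mpr (Finset.mem_erase.mp hsmem).1
    exact HALProof.sectionVitali_eq hne y hy hinj β₀ β
  rw [Finset.sum_congr rfl hsect,
    ← ENNReal.ofReal_sum_of_nonneg
      (fun s _ => Finset.sum_nonneg (fun _ _ => abs_nonneg _)),
    ← ENNReal.ofReal_add (abs_nonneg _)
      (Finset.sum_nonneg (fun _ _ => Finset.sum_nonneg (fun _ _ => abs_nonneg _)))]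
  congr 1
  congr 1
  refine Finset.sum_fiberwise_of_maps_to ?_ _
  intro k _
  refine Finset.mem_erase.mpr ⟨?_, Finset.mem_powerset.mpr (Finset.subset_univ _)⟩
  obtain ⟨i, hi⟩ := Function.ne_iff.mp (hy0 k)
  exact Finset.ne_empty_of_mem
    (Finset.mem_filter.mpr ⟨Finset.mem_univ _, by simpa using hi⟩)
end
end

section
/- Fix M > 0 and n ≥ 1, and let (T̃_i, Δ_i) ∈ (0,1] × {0,1} for i = 1,…,n. Let T̃_(1) < ⋯ < T̃_(n′) be the distinct values among T̃_1,…,T̃_n. For f : [0,1] → ℝ define the empirical risk R_n(f) = (1/n) Σ_{i=1}^n [ ∫_0^{T̃_i} e^{f(u)} du − Δ_i f(T̃_i) ]. Suppose f° ∈ D^1_M and there exists j ∈ {1,…,n′−1} with f°(T̃_(j)) > f°(T̃_(j+1)). Then there exists f̌ ∈ D^1_M with R_n(f̌) < R_n(f°); in particular, f° is not a minimizer of R_n over D^1_M. -/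
open MeasureTheory Filter Set
open scoped ENNReal NNReal

noncomputable section

namespace HAL1

/-- Univariate càdlàg on `[0,1]`: right-continuous with left-hand limits. -/
def IsCadlag1 (f : ℝ → ℝ) : Prop :=
  ∀ u ∈ Set.Icc (0 : ℝ) 1,
    (∀ x : ℕ → ℝ, (∀ n, x n ∈ Set.Icc u 1) → Filter.Tendsto x Filter.atTop (nhds u) →
      Filter.Tendsto (fun n => f (x n)) Filter.atTop (nhds (f u))) ∧
    (∀ x : ℕ → ℝ, (∀ n, x n ∈ Set.Ico 0 u) → Filter.Tendsto x Filter.atTop (nhds u) →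
      ∃ L : ℝ, Filter.Tendsto (fun n => f (x n)) Filter.atTop (nhds L))

/-- A finite partition `0 = t 0 < t 1 < ⋯ < t L = 1` of `(0,1]`. -/
structure Partition1 where
  L : ℕ
  t : ℕ → ℝ
  Lpos : 0 < L
  t0 : t 0 = 0
  tL : t L = 1
  mono : ∀ i, i < L → t i < t (i + 1)

/-- The sectional variation norm `‖f‖_v = |f 0| + V(f)` of a univariate function. -/
def svn1 (f : ℝ → ℝ) : ℝ≥0∞ :=
  ENNReal.ofReal |f 0| +
    ⨆ p : Partition1,
      ENNReal.ofReal (∑ l ∈ Finset.range p.L, |f (p.t (l + 1)) - f (p.t l)|)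

/-- `D^1_M`: univariate càdlàg functions with sectional variation norm at most `M`. -/
def D1 (M : ℝ) : Set (ℝ → ℝ) :=
  {f | IsCadlag1 f ∧ svn1 f ≤ ENNReal.ofReal M}

/-- The empirical risk `R_n(f)` for the negative partial log-likelihood loss. -/
def survRisk (n : ℕ) (T : Fin n → ℝ) (Δ : Fin n → ℝ) (f : ℝ → ℝ) : ℝ :=
  (1 / (n : ℝ)) * ∑ i, ((∫ u in (0:ℝ)..(T i), Real.exp (f u)) - Δ i * f (T i))

end HAL1

namespace HALAux
open HAL1

def psum (f : ℝ → ℝ) (p : Partition1) : ℝ :=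
  ∑ l ∈ Finset.range p.L, |f (p.t (l + 1)) - f (p.t l)|

lemma mono_lt (p : Partition1) : ∀ {i k : ℕ}, i < k → k ≤ p.L → p.t i < p.t k := by
  intro i k
  induction k with
  | zero => omega
  | succ m ih =>
    intro hik hk
    rcases Nat.lt_succ_iff_lt_or_eq.mp hik with h | h
    · exact lt_trans (ih h (by omega)) (p.mono m (by omega))
    · subst h; exact p.mono i (by omega)

lemma mono_le (p : Partition1) {i k : ℕ} (h : i ≤ k) (hk : k ≤ p.L) : p.t i ≤ p.t k := by
  rcases Nat.eq_or_lt_of_le h with h' | h'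
  · subst h'; exact le_rfl
  · exact (mono_lt p h' hk).le

lemma telescope (h : ℕ → ℝ) : ∀ {α β : ℕ}, α ≤ β →
    |h β - h α| ≤ ∑ l ∈ Finset.Ico α β, |h (l + 1) - h l| := by
  intro α β
  induction β with
  | zero =>
    intro hab
    have hα : α = 0 := by omega
    subst hα; simp
  | succ m ih =>
    intro hab
    rcases Nat.eq_or_lt_of_le hab with h' | h'
    · rw [← h']; simp
    · have ham : α ≤ m := by omega
      rw [Finset.sum_Ico_succ_top ham]
      have h2 := ih ham
      have h3 := abs_sub_le (h (m + 1)) (h m) (h α)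
      linarith

lemma abs_minmax (x y c : ℝ) :
    |x - y| = |min x c - min y c| + |max x c - max y c| := by
  rcases le_total x c with hx | hx <;> rcases le_total y c with hy | hy
  · rw [min_eq_left hx, min_eq_left hy, max_eq_right hx, max_eq_right hy]; simp
  · rw [min_eq_left hx, min_eq_right hy, max_eq_right hx, max_eq_left hy,
      abs_of_nonpos (by linarith), abs_of_nonpos (by linarith), abs_of_nonpos (by linarith)]
    ring
  · rw [min_eq_right hx, min_eq_left hy, max_eq_left hx, max_eq_right hy,
      abs_of_nonneg (by linarith), abs_of_nonneg (by linarith), abs_of_nonneg (by linarith)]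
    ring
  · rw [min_eq_right hx, min_eq_right hy, max_eq_left hx, max_eq_left hy]; simp

lemma sum_insert_le (f : ℝ → ℝ) (t t' : ℕ → ℝ) (L I : ℕ) (c : ℝ) (hIL : I < L)
    (ha : ∀ k, k ≤ I → t' k = t k) (hb : t' (I + 1) = c)
    (hc : ∀ k, I + 2 ≤ k → t' k = t (k - 1)) :
    ∑ l ∈ Finset.range L, |f (t (l + 1)) - f (t l)| ≤
      ∑ l ∈ Finset.range (L + 1), |f (t' (l + 1)) - f (t' l)| := by
  have split2 : ∑ l ∈ Finset.range (L + 1), |f (t' (l + 1)) - f (t' l)|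
      = (∑ l ∈ Finset.Ico 0 I, |f (t' (l + 1)) - f (t' l)|)
      + (∑ l ∈ Finset.Ico I (I + 2), |f (t' (l + 1)) - f (t' l)|)
      + (∑ l ∈ Finset.Ico (I + 2) (L + 1), |f (t' (l + 1)) - f (t' l)|) := by
    have h1 := Finset.sum_Ico_consecutive (fun l => |f (t' (l + 1)) - f (t' l)|)
      (show (0:ℕ) ≤ I by omega) (show I ≤ L + 1 by omega)
    have h2 := Finset.sum_Ico_consecutive (fun l => |f (t' (l + 1)) - f (t' l)|)
      (show I ≤ I + 2 by omega) (show I + 2 ≤ L + 1 by omega)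
    rw [Finset.range_eq_Ico, ← h1, ← h2]; ring
  have split1 : ∑ l ∈ Finset.range L, |f (t (l + 1)) - f (t l)|
      = (∑ l ∈ Finset.Ico 0 I, |f (t (l + 1)) - f (t l)|)
      + |f (t (I + 1)) - f (t I)|
      + (∑ l ∈ Finset.Ico (I + 1) L, |f (t (l + 1)) - f (t l)|) := by
    have h1 := Finset.sum_Ico_consecutive (fun l => |f (t (l + 1)) - f (t l)|)
      (show (0:ℕ) ≤ I by omega) (show I ≤ L by omega)
    have h2 := Finset.sum_Ico_consecutive (fun l => |f (t (l + 1)) - f (t l)|)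
      (show I ≤ I + 1 by omega) (show I + 1 ≤ L by omega)
    rw [Finset.range_eq_Ico, ← h1, ← h2, Nat.Ico_succ_singleton, Finset.sum_singleton]
    ring
  rw [split1, split2]
  have eA : ∑ l ∈ Finset.Ico 0 I, |f (t' (l + 1)) - f (t' l)|
      = ∑ l ∈ Finset.Ico 0 I, |f (t (l + 1)) - f (t l)| := by
    refine Finset.sum_congr rfl fun l hl => ?_
    rw [Finset.mem_Ico] at hl
    rw [ha l (by omega), ha (l + 1) (by omega)]
  have eB : |f (t (I + 1)) - f (t I)| ≤ ∑ l ∈ Finset.Ico I (I + 2), |f (t' (l + 1)) - f (t' l)| := by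
    rw [Finset.sum_Ico_succ_top (by omega), Nat.Ico_succ_singleton, Finset.sum_singleton,
      ha I le_rfl, hb, hc (I + 2) (by omega)]
    have h21 : I + 2 - 1 = I + 1 := by omega
    rw [h21]
    have := abs_sub_le (f (t (I + 1))) (f c) (f (t I))
    linarith
  have eC : ∑ l ∈ Finset.Ico (I + 2) (L + 1), |f (t' (l + 1)) - f (t' l)|
      = ∑ l ∈ Finset.Ico (I + 1) L, |f (t (l + 1)) - f (t l)| := by
    rw [Finset.sum_Ico_eq_sum_range, Finset.sum_Ico_eq_sum_range]
    have hL : L + 1 - (I + 2) = L - (I + 1) := by omega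
    rw [hL]
    refine Finset.sum_congr rfl fun m _ => ?_
    rw [hc (I + 2 + m) (by omega), hc (I + 2 + m + 1) (by omega)]
    have e1 : I + 2 + m - 1 = I + 1 + m := by omega
    have e2 : I + 2 + m + 1 - 1 = I + 1 + m + 1 := by omega
    rw [e1, e2]
  rw [eA, eC]
  linarith

lemma insert_point (p : Partition1) (c : ℝ) (hc0 : 0 ≤ c) (hc1 : c ≤ 1) :
    ∃ p' : Partition1,
      (∀ f : ℝ → ℝ, psum f p ≤ psum f p') ∧
      (∃ i, i ≤ p'.L ∧ p'.t i = c) ∧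
      (∀ i, i ≤ p.L → ∃ k, k ≤ p'.L ∧ p'.t k = p.t i) := by
  classical
  by_cases hmem : ∃ i, i ≤ p.L ∧ p.t i = c
  · exact ⟨p, fun f => le_rfl, hmem, fun i hi => ⟨i, hi, rfl⟩⟩
  push_neg at hmem
  have hc0' : 0 < c := by
    rcases eq_or_lt_of_le hc0 with h | h
    · exact absurd (p.t0.trans h) (hmem 0 (Nat.zero_le _))
    · exact h
  set P : ℕ → Prop := fun i => p.t i < c with hP
  set I := Nat.findGreatest P p.L with hIdef
  have hI_le : I ≤ p.L := Nat.findGreatest_le _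
  have hPI : p.t I < c := Nat.findGreatest_spec (Nat.zero_le _) (show P 0 by rw [hP]; simp [p.t0, hc0'])
  have hIL : I < p.L := by
    rcases Nat.eq_or_lt_of_le hI_le with h | h
    · exfalso; rw [h, p.tL] at hPI; linarith
    · exact h
  have hsucc : c < p.t (I + 1) := by
    have h1 : ¬ P (I + 1) := Nat.findGreatest_is_greatest (n := p.L) (by omega) (by omega)
    have h2 : p.t (I + 1) ≠ c := hmem (I + 1) (by omega)
    rw [hP] at h1
    exact lt_of_le_of_ne (not_lt.mp h1) (Ne.symm h2)
  set t' : ℕ → ℝ := fun k => if k ≤ I then p.t k else if k = I + 1 then c else p.t (k - 1) with ht'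
  have ht'a : ∀ k, k ≤ I → t' k = p.t k := fun k hk => if_pos hk
  have ht'b : t' (I + 1) = c := by
    show (if I + 1 ≤ I then _ else if I + 1 = I + 1 then c else _) = c
    rw [if_neg (by omega), if_pos rfl]
  have ht'c : ∀ k, I + 2 ≤ k → t' k = p.t (k - 1) := by
    intro k hk
    show (if k ≤ I then _ else if k = I + 1 then _ else p.t (k - 1)) = p.t (k - 1)
    rw [if_neg (by omega), if_neg (by omega)]
  have hmono : ∀ k, k < p.L + 1 → t' k < t' (k + 1) := by
    intro k hk
    rcases Nat.lt_or_ge k I with h | h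
    · rw [ht'a k (by omega), ht'a (k + 1) (by omega)]; exact p.mono k (by omega)
    rcases Nat.eq_or_lt_of_le h with h' | h'
    · rw [ht'a k (by omega), ← h', ht'b]; exact hPI
    rcases Nat.eq_or_lt_of_le h' with h'' | h''
    · rw [← h'', ht'b, ht'c (I + 2) (by omega)]
      have : I + 2 - 1 = I + 1 := by omega
      rw [this]; exact hsucc
    · rw [ht'c k (by omega), ht'c (k + 1) (by omega)]
      have e1 : k + 1 - 1 = (k - 1) + 1 := by omega
      rw [e1]; exact p.mono (k - 1) (by omega)
  refine ⟨⟨p.L + 1, t', by omega, ?_, ?_, hmono⟩, ?_, ?_, ?_⟩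
  · rw [ht'a 0 (Nat.zero_le _)]; exact p.t0
  · rw [ht'c (p.L + 1) (by omega)]; exact p.tL
  · intro f
    exact sum_insert_le f p.t t' p.L I c hIL ht'a ht'b ht'c
  · exact ⟨I + 1, by show I + 1 ≤ p.L + 1; omega, ht'b⟩
  · intro i hi
    rcases le_or_gt i I with h | h
    · exact ⟨i, by show i ≤ p.L + 1; omega, ht'a i h⟩
    · exact ⟨i + 1, by show i + 1 ≤ p.L + 1; omega, ht'c (i + 1) (by omega)⟩

lemma compare_psum (f₀ : ℝ → ℝ) (s tn b : ℝ) (hstn : s < tn)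
    (hbs : b ≤ f₀ s) (hftn : f₀ tn = b) (P : Partition1) (α β : ℕ)
    (hαL : α ≤ P.L) (hβL : β ≤ P.L) (hα : P.t α = s) (hβ : P.t β = tn) :
    psum (fun u => if s ≤ u ∧ u < tn then min (f₀ u) b else f₀ u) P ≤ psum f₀ P := by
  set g : ℝ → ℝ := fun u => if s ≤ u ∧ u < tn then min (f₀ u) b else f₀ u with hgdef
  have hg_lt : ∀ x : ℝ, x < s → g x = f₀ x := by
    intro x hx
    simp only [hgdef]
    exact if_neg (by rintro ⟨h1, -⟩; linarith)
  have hg_ge : ∀ x : ℝ, tn ≤ x → g x = f₀ x := by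
    intro x hx
    simp only [hgdef]
    exact if_neg (by rintro ⟨-, h2⟩; linarith)
  have hαβ : α < β := by
    by_contra hcon
    push_neg at hcon
    have := mono_le P hcon hαL
    rw [hα, hβ] at this
    linarith
  have hg_mid : ∀ k, α ≤ k → k ≤ β → g (P.t k) = min (f₀ (P.t k)) b := by
    intro k h1 h2
    rcases Nat.eq_or_lt_of_le h2 with h | h
    · subst h
      rw [hβ]
      rw [hg_ge tn le_rfl, hftn, min_self]
    · have hx1 : s ≤ P.t k := by rw [← hα]; exact mono_le P h1 (by omega)
      have hx2 : P.t k < tn := by rw [← hβ]; exact mono_lt P h hβL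
      simp only [hgdef]
      exact if_pos ⟨hx1, hx2⟩
  -- splits
  have splitg : psum g P = (∑ l ∈ Finset.Ico 0 α, |g (P.t (l + 1)) - g (P.t l)|)
      + (∑ l ∈ Finset.Ico α β, |g (P.t (l + 1)) - g (P.t l)|)
      + (∑ l ∈ Finset.Ico β P.L, |g (P.t (l + 1)) - g (P.t l)|) := by
    have h1 := Finset.sum_Ico_consecutive (fun l => |g (P.t (l + 1)) - g (P.t l)|)
      (show (0:ℕ) ≤ α by omega) (show α ≤ P.L by omega)
    have h2 := Finset.sum_Ico_consecutive (fun l => |g (P.t (l + 1)) - g (P.t l)|)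
      (show α ≤ β by omega) (show β ≤ P.L by omega)
    rw [psum, Finset.range_eq_Ico, ← h1, ← h2]; ring
  have splitf : psum f₀ P = (∑ l ∈ Finset.Ico 0 α, |f₀ (P.t (l + 1)) - f₀ (P.t l)|)
      + (∑ l ∈ Finset.Ico α β, |f₀ (P.t (l + 1)) - f₀ (P.t l)|)
      + (∑ l ∈ Finset.Ico β P.L, |f₀ (P.t (l + 1)) - f₀ (P.t l)|) := by
    have h1 := Finset.sum_Ico_consecutive (fun l => |f₀ (P.t (l + 1)) - f₀ (P.t l)|)
      (show (0:ℕ) ≤ α by omega) (show α ≤ P.L by omega)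
    have h2 := Finset.sum_Ico_consecutive (fun l => |f₀ (P.t (l + 1)) - f₀ (P.t l)|)
      (show α ≤ β by omega) (show β ≤ P.L by omega)
    rw [psum, Finset.range_eq_Ico, ← h1, ← h2]; ring
  -- tail
  have htail : ∑ l ∈ Finset.Ico β P.L, |g (P.t (l + 1)) - g (P.t l)|
      = ∑ l ∈ Finset.Ico β P.L, |f₀ (P.t (l + 1)) - f₀ (P.t l)| := by
    refine Finset.sum_congr rfl fun l hl => ?_
    rw [Finset.mem_Ico] at hl
    have e1 : g (P.t l) = f₀ (P.t l) := hg_ge _ (by rw [← hβ]; exact mono_le P hl.1 (by omega))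
    have e2 : g (P.t (l + 1)) = f₀ (P.t (l + 1)) := hg_ge _ (by rw [← hβ]; exact mono_le P (by omega) (by omega))
    rw [e1, e2]
  -- middle
  have hmid_eq : ∑ l ∈ Finset.Ico α β, |g (P.t (l + 1)) - g (P.t l)|
      = (∑ l ∈ Finset.Ico α β, |f₀ (P.t (l + 1)) - f₀ (P.t l)|)
        - ∑ l ∈ Finset.Ico α β, |max (f₀ (P.t (l + 1))) b - max (f₀ (P.t l)) b| := by
    rw [← Finset.sum_sub_distrib]
    refine Finset.sum_congr rfl fun l hl => ?_
    rw [Finset.mem_Ico] at hl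
    rw [hg_mid l hl.1 (by omega), hg_mid (l + 1) (by omega) (by omega)]
    have := abs_minmax (f₀ (P.t (l + 1))) (f₀ (P.t l)) b
    linarith
  have hmid_ge : f₀ s - b ≤ ∑ l ∈ Finset.Ico α β, |max (f₀ (P.t (l + 1))) b - max (f₀ (P.t l)) b| := by
    have h1 := telescope (fun k => max (f₀ (P.t k)) b) (le_of_lt hαβ)
    rw [hα, hβ, hftn, max_self, max_eq_left hbs] at h1
    calc f₀ s - b = |b - f₀ s| := by rw [abs_sub_comm, abs_of_nonneg (by linarith)]
    _ ≤ _ := h1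
  -- head
  have hhead : ∑ l ∈ Finset.Ico 0 α, |g (P.t (l + 1)) - g (P.t l)|
      ≤ (∑ l ∈ Finset.Ico 0 α, |f₀ (P.t (l + 1)) - f₀ (P.t l)|) + (f₀ s - b) := by
    rcases Nat.eq_zero_or_pos α with h | h
    · subst h; simp; linarith
    obtain ⟨m, rfl⟩ : ∃ m, α = m + 1 := ⟨α - 1, by omega⟩
    rw [Finset.sum_Ico_succ_top (Nat.zero_le m), Finset.sum_Ico_succ_top (Nat.zero_le m)]
    have hsame : ∑ l ∈ Finset.Ico 0 m, |g (P.t (l + 1)) - g (P.t l)|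
        = ∑ l ∈ Finset.Ico 0 m, |f₀ (P.t (l + 1)) - f₀ (P.t l)| := by
      refine Finset.sum_congr rfl fun l hl => ?_
      rw [Finset.mem_Ico] at hl
      have e1 : g (P.t l) = f₀ (P.t l) := hg_lt _ (by rw [← hα]; exact mono_lt P (by omega) hαL)
      have e2 : g (P.t (l + 1)) = f₀ (P.t (l + 1)) := hg_lt _ (by rw [← hα]; exact mono_lt P (by omega) hαL)
      rw [e1, e2]
    have elast1 : g (P.t (m + 1)) = b := by
      rw [hg_mid (m + 1) le_rfl (by omega), hα, min_eq_right hbs]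
    have elast2 : g (P.t m) = f₀ (P.t m) := hg_lt _ (by rw [← hα]; exact mono_lt P (by omega) hαL)
    rw [hsame, elast1, elast2, hα]
    have h4 := abs_sub_le b (f₀ s) (f₀ (P.t m))
    have h5 : |b - f₀ s| = f₀ s - b := by rw [abs_sub_comm, abs_of_nonneg (by linarith)]
    have h6 : |f₀ s - f₀ (P.t m)| = |f₀ (P.t (m + 1)) - f₀ (P.t m)| := by rw [hα]
    linarith
  rw [splitg, splitf]
  linarith

end HALAux
section MainAux
open HAL1 HALAux

/-- composition with a countable-range measurable map is measurable -/
lemma HALAux.meas_comp_countable (h : ℝ → ℝ) (m : ℝ → ℝ) (hm : Measurable m)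
    (hc : (Set.range m).Countable) : Measurable fun u => h (m u) := by
  intro B _
  have hpre : (fun u => h (m u)) ⁻¹' B = m ⁻¹' (⋃ v ∈ (Set.range m ∩ h ⁻¹' B), {v}) := by
    ext u
    simp only [Set.mem_preimage, Set.mem_iUnion, Set.mem_singleton_iff, Set.mem_inter_iff,
      Set.mem_range, exists_prop]
    constructor
    · intro hb; exact ⟨m u, ⟨⟨u, rfl⟩, hb⟩, rfl⟩
    · rintro ⟨v, ⟨-, hb⟩, hv⟩; rw [hv]; exact hb
  rw [hpre]
  exact hm (MeasurableSet.biUnion (hc.mono Set.inter_subset_left)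
    fun v _ => measurableSet_singleton v)

/-- a càdlàg function on [0,1], extended by 0, is measurable -/
lemma HALAux.meas_of_cadlag (f₀ : ℝ → ℝ) (hcad : IsCadlag1 f₀) :
    Measurable fun u => if u ∈ Set.Icc (0:ℝ) 1 then f₀ u else 0 := by
  set r : ℕ → ℝ → ℝ := fun k u => min 1 (((⌈u * 2 ^ k⌉ : ℤ) : ℝ) / 2 ^ k) with hrdef
  have hpow : ∀ k : ℕ, (0:ℝ) < 2 ^ k := fun k => by positivity
  have hrmono : ∀ k, Monotone (r k) := by
    intro k
    have h1 : Monotone fun u : ℝ => ((⌈u * 2 ^ k⌉ : ℤ) : ℝ) := by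
      intro u v huv
      dsimp only
      exact_mod_cast Int.ceil_le_ceil (mul_le_mul_of_nonneg_right huv (hpow k).le)
    exact monotone_const.min (h1.div_const (hpow k).le)
  have hrmeas : ∀ k, Measurable (r k) := fun k => (hrmono k).measurable
  have hrcount : ∀ k, (Set.range (r k)).Countable := by
    intro k
    have hsub : Set.range (r k) ⊆ insert 1 (Set.range fun z : ℤ => ((z : ℝ) / 2 ^ k)) := by
      rintro _ ⟨u, rfl⟩
      rcases min_choice (1 : ℝ) (((⌈u * 2 ^ k⌉ : ℤ) : ℝ) / 2 ^ k) with h | h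
      · rw [hrdef]; simp only; rw [h]; exact Set.mem_insert _ _
      · rw [hrdef]; simp only; rw [h]
        exact Set.mem_insert_of_mem _ ⟨⌈u * 2 ^ k⌉, rfl⟩
    exact Set.Countable.mono hsub ((Set.countable_range _).insert 1)
  have hrIcc : ∀ k, ∀ u ∈ Set.Icc (0:ℝ) 1, r k u ∈ Set.Icc u 1 := by
    intro k u hu
    constructor
    · refine le_min hu.2 ?_
      rw [le_div_iff₀ (hpow k)]
      exact Int.le_ceil _
    · exact min_le_left _ _
  have hrtend : ∀ u ∈ Set.Icc (0:ℝ) 1, Tendsto (fun k => r k u) atTop (nhds u) := by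
    intro u hu
    have hup : ∀ k, r k u ≤ u + (1/2) ^ k := by
      intro k
      refine le_trans (min_le_right _ _) ?_
      rw [div_le_iff₀ (hpow k)]
      have := (Int.ceil_lt_add_one (u * 2 ^ k)).le
      calc ((⌈u * 2 ^ k⌉ : ℤ) : ℝ) ≤ u * 2 ^ k + 1 := this
      _ = (u + (1/2) ^ k) * 2 ^ k := by
          rw [add_mul]
          congr 1
          rw [← mul_pow]
          norm_num
    have hlow : ∀ k, u ≤ r k u := fun k => (hrIcc k u hu).1
    have htendup : Tendsto (fun k : ℕ => u + (1/2 : ℝ) ^ k) atTop (nhds u) := by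
      have := tendsto_pow_atTop_nhds_zero_of_lt_one (by norm_num : (0:ℝ) ≤ 1/2) (by norm_num)
      simpa using tendsto_const_nhds.add this
    exact tendsto_of_tendsto_of_tendsto_of_le_of_le tendsto_const_nhds htendup hlow hup
  have hFk : ∀ k : ℕ, Measurable fun u => if u ∈ Set.Icc (0:ℝ) 1 then f₀ (r k u) else 0 :=
    fun k => Measurable.ite measurableSet_Icc
      (HALAux.meas_comp_countable f₀ (r k) (hrmeas k) (hrcount k)) measurable_const
  apply measurable_of_tendsto_metrizable hFk
  rw [tendsto_pi_nhds]
  intro u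
  by_cases hu : u ∈ Set.Icc (0:ℝ) 1
  · simp only [if_pos hu]
    exact (hcad u hu).1 (fun k => r k u) (fun k => hrIcc k u hu) (hrtend u hu)
  · simp only [if_neg hu]
    exact tendsto_const_nhds

end MainAux

/-- if `f°` decreases between two consecutive distinct observed times, then
some `f̌ ∈ D^1_M` has strictly smaller empirical risk; in particular `f°` is not an
empirical risk minimizer over `D^1_M`. -/
theorem empirical_risk_minimizer_not_decreasing
    (M : ℝ) (hM : 0 < M) (n : ℕ) (hn : 1 ≤ n)
    (T : Fin n → ℝ) (hT : ∀ i, T i ∈ Set.Ioc (0 : ℝ) 1)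
    (Δ : Fin n → ℝ) (hΔ : ∀ i, Δ i = 0 ∨ Δ i = 1)
    (f₀ : ℝ → ℝ) (hf₀ : f₀ ∈ HAL1.D1 M)
    (j : ℕ) (hj : j + 1 < ((Finset.univ.image T).sort (· ≤ ·)).length)
    (hdec : f₀ (((Finset.univ.image T).sort (· ≤ ·)).get ⟨j, by omega⟩) >
      f₀ (((Finset.univ.image T).sort (· ≤ ·)).get ⟨j + 1, hj⟩)) :
    (∃ g ∈ HAL1.D1 M, HAL1.survRisk n T Δ g < HAL1.survRisk n T Δ f₀) ∧
      ¬ (∀ g ∈ HAL1.D1 M, HAL1.survRisk n T Δ f₀ ≤ HAL1.survRisk n T Δ g) := by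
  classical
  set lst := (Finset.univ.image T).sort (· ≤ ·) with hlst
  have hsorted : lst.SortedLT := by rw [hlst]; exact Finset.sortedLT_sort _
  have hsm : StrictMono lst.get := hsorted.strictMono_get
  set tj := lst.get ⟨j, by omega⟩ with htjdef
  set tn := lst.get ⟨j + 1, hj⟩ with htndef
  set a := f₀ tj with hadef
  set b := f₀ tn with hbdef
  have hba : b < a := hdec
  -- membership of tj, tn among observed times
  have htj_mem : ∃ i, T i = tj := by
    have h2 := (Finset.mem_sort (α := ℝ) (· ≤ ·)).mp (List.get_mem lst ⟨j, by omega⟩)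
    obtain ⟨i, -, hi⟩ := Finset.mem_image.mp h2
    exact ⟨i, hi⟩
  have htn_mem : ∃ i, T i = tn := by
    have h2 := (Finset.mem_sort (α := ℝ) (· ≤ ·)).mp (List.get_mem lst ⟨j + 1, hj⟩)
    obtain ⟨i, -, hi⟩ := Finset.mem_image.mp h2
    exact ⟨i, hi⟩
  obtain ⟨itj, hitj⟩ := htj_mem
  obtain ⟨i₀, hTi₀⟩ := htn_mem
  have htj01 : 0 < tj ∧ tj ≤ 1 := by
    have := hT itj; rw [hitj] at this; exact ⟨this.1, this.2⟩
  have htn01 : 0 < tn ∧ tn ≤ 1 := by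
    have := hT i₀; rw [hTi₀] at this; exact ⟨this.1, this.2⟩
  have htjtn : tj < tn := hsm (Fin.mk_lt_mk.mpr (Nat.lt_succ_self j))
  -- no observed time strictly between tj and tn
  have hcons : ∀ i : Fin n, ¬(tj < T i ∧ T i < tn) := by
    rintro i ⟨h1, h2⟩
    have hmem : T i ∈ lst :=
      (Finset.mem_sort (α := ℝ) (· ≤ ·)).mpr (Finset.mem_image_of_mem T (Finset.mem_univ i))
    obtain ⟨k, hk⟩ := List.mem_iff_get.mp hmem
    have hk1 : (⟨j, by omega⟩ : Fin lst.length) < k := hsm.lt_iff_lt.mp (by rw [hk]; exact h1)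
    have hk2 : k < (⟨j + 1, hj⟩ : Fin lst.length) := hsm.lt_iff_lt.mp (by rw [hk]; exact h2)
    rw [Fin.lt_def] at hk1 hk2
    simp only [Fin.val_mk] at hk1 hk2
    omega
  have hcadf : HAL1.IsCadlag1 f₀ := hf₀.1
  -- find a small interval to the right of tj where f₀ stays above (a+b)/2
  obtain ⟨δ, hδ0, hδtn, hδgt⟩ : ∃ δ : ℝ, 0 < δ ∧ tj + δ < tn ∧
      ∀ u ∈ Set.Icc tj (tj + δ), (a + b) / 2 < f₀ u := by
    by_contra hcon
    push_neg at hcon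
    have hsel : ∀ k : ℕ, ∃ u, u ∈ Set.Icc tj (tj + min ((tn - tj) / 2) (1 / (k + 1 : ℝ))) ∧
        f₀ u ≤ (a + b) / 2 := by
      intro k
      have hmin0 : 0 < min ((tn - tj) / 2) (1 / (k + 1 : ℝ)) := lt_min (by linarith) (by positivity)
      have hminlt : tj + min ((tn - tj) / 2) (1 / (k + 1 : ℝ)) < tn := by
        have := min_le_left ((tn - tj) / 2) (1 / (k + 1 : ℝ)); linarith
      obtain ⟨u, hu1, hu2⟩ := hcon _ hmin0 hminlt
      exact ⟨u, hu1, hu2⟩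
    choose x hx1 hx2 using hsel
    have hxmem : ∀ k, x k ∈ Set.Icc tj 1 := by
      intro k
      refine ⟨(hx1 k).1, ?_⟩
      have h2 := (hx1 k).2
      have h3 := min_le_left ((tn - tj) / 2) (1 / (k + 1 : ℝ))
      have h4 : tn ≤ 1 := htn01.2
      linarith
    have hxt : Tendsto x atTop (nhds tj) := by
      have hup : ∀ k : ℕ, x k ≤ tj + 1 / (k + 1 : ℝ) := by
        intro k
        have h2 := (hx1 k).2
        have h3 := min_le_right ((tn - tj) / 2) (1 / (k + 1 : ℝ))
        linarith
      have htendup : Tendsto (fun k : ℕ => tj + 1 / (k + 1 : ℝ)) atTop (nhds tj) := by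
        have h5 := tendsto_one_div_add_atTop_nhds_zero_nat (𝕜 := ℝ)
        simpa using tendsto_const_nhds.add h5
      exact tendsto_of_tendsto_of_tendsto_of_le_of_le tendsto_const_nhds htendup
        (fun k => (hx1 k).1) hup
    have hlim := (hcadf tj ⟨htj01.1.le, htj01.2⟩).1 x hxmem hxt
    have hle : a ≤ (a + b) / 2 := le_of_tendsto hlim (Filter.Eventually.of_forall hx2)
    linarith
  set s := tj + δ / 2 with hsdef
  have hs_tj : tj < s := by rw [hsdef]; linarith
  have hstn : s < tn := by rw [hsdef]; linarith
  have hs0 : 0 < s := by linarith [htj01.1]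
  have hs1 : s ≤ 1 := le_trans hstn.le htn01.2
  have hfs : (a + b) / 2 < f₀ s := hδgt s ⟨by linarith, by rw [hsdef]; linarith⟩
  have hbfs : b ≤ f₀ s := by linarith
  -- the improved function
  set g : ℝ → ℝ := fun u => if s ≤ u ∧ u < tn then min (f₀ u) b else f₀ u with hgdef
  have hg_lt : ∀ x : ℝ, x < s → g x = f₀ x := by
    intro x hx
    simp only [hgdef]
    exact if_neg (by rintro ⟨h1, -⟩; linarith)
  have hg_ge : ∀ x : ℝ, tn ≤ x → g x = f₀ x := by
    intro x hx
    simp only [hgdef]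
    exact if_neg (by rintro ⟨-, h2⟩; linarith)
  have hgle : ∀ x, g x ≤ f₀ x := by
    intro x
    by_cases h : s ≤ x ∧ x < tn
    · simp only [hgdef]; rw [if_pos h]; exact min_le_left _ _
    · simp only [hgdef]; rw [if_neg h]
  -- g is càdlàg
  have hgcad : HAL1.IsCadlag1 g := by
    intro u hu
    refine ⟨?_, ?_⟩
    · intro x hx hxt
      rcases lt_or_ge u s with h1 | h1
      · have hev : ∀ᶠ k in atTop, f₀ (x k) = g (x k) := by
          filter_upwards [hxt.eventually (eventually_lt_nhds h1)] with k hk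
          exact (hg_lt _ hk).symm
        rw [hg_lt u h1]
        exact ((hcadf u hu).1 x hx hxt).congr' hev
      · rcases lt_or_ge u tn with h2 | h2
        · have hgu : g u = min (f₀ u) b := by simp only [hgdef]; rw [if_pos ⟨h1, h2⟩]
          rw [hgu]
          have hev : ∀ᶠ k in atTop, min (f₀ (x k)) b = g (x k) := by
            filter_upwards [hxt.eventually (eventually_lt_nhds h2)] with k hk
            have hsx : s ≤ x k := le_trans h1 (hx k).1
            simp only [hgdef]; rw [if_pos ⟨hsx, hk⟩]
          exact (((hcadf u hu).1 x hx hxt).min tendsto_const_nhds).congr' hev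
        · rw [hg_ge u h2]
          exact ((hcadf u hu).1 x hx hxt).congr
            (fun k => (hg_ge _ (le_trans h2 (hx k).1)).symm)
    · intro x hx hxt
      obtain ⟨L0, hL0⟩ := (hcadf u hu).2 x hx hxt
      rcases le_or_gt u s with h1 | h1
      · exact ⟨L0, hL0.congr fun k => (hg_lt _ (lt_of_lt_of_le (hx k).2 h1)).symm⟩
      · rcases le_or_gt u tn with h2 | h2
        · refine ⟨min L0 b, ?_⟩
          have hev : ∀ᶠ k in atTop, min (f₀ (x k)) b = g (x k) := by
            filter_upwards [hxt.eventually (eventually_gt_nhds h1)] with k hk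
            simp only [hgdef]; rw [if_pos ⟨hk.le, lt_of_lt_of_le (hx k).2 h2⟩]
          exact (hL0.min tendsto_const_nhds).congr' hev
        · refine ⟨L0, ?_⟩
          have hev : ∀ᶠ k in atTop, f₀ (x k) = g (x k) := by
            filter_upwards [hxt.eventually (eventually_gt_nhds h2)] with k hk
            exact (hg_ge _ hk.le).symm
          exact hL0.congr' hev
  -- sectional variation norm of g
  have hsvn_g : HAL1.svn1 g ≤ ENNReal.ofReal M := by
    refine le_trans ?_ hf₀.2
    have h0 : g 0 = f₀ 0 := hg_lt 0 hs0
    have e1 : HAL1.svn1 g = ENNReal.ofReal |g 0| +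
        ⨆ p : HAL1.Partition1, ENNReal.ofReal (HALAux.psum g p) := rfl
    have e2 : HAL1.svn1 f₀ = ENNReal.ofReal |f₀ 0| +
        ⨆ p : HAL1.Partition1, ENNReal.ofReal (HALAux.psum f₀ p) := rfl
    rw [e1, e2, h0]
    refine add_le_add le_rfl (iSup_le fun p => ?_)
    obtain ⟨p₁, hle1, ⟨i₁, hi₁L, hi₁⟩, -⟩ := HALAux.insert_point p s hs0.le hs1
    obtain ⟨p₂, hle2, ⟨i₂, hi₂L, hi₂⟩, hpres⟩ := HALAux.insert_point p₁ tn htn01.1.le htn01.2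
    obtain ⟨i₁', hi₁'L, hi₁'⟩ := hpres i₁ hi₁L
    have hcmp := HALAux.compare_psum f₀ s tn b hstn hbfs hbdef.symm p₂ i₁' i₂ hi₁'L hi₂L
      (by rw [hi₁', hi₁]) hi₂
    have hchain : HALAux.psum g p ≤ HALAux.psum f₀ p₂ :=
      le_trans (hle1 g) (le_trans (hle2 g) hcmp)
    exact le_trans (ENNReal.ofReal_le_ofReal hchain)
      (le_iSup (fun q : HAL1.Partition1 => ENNReal.ofReal (HALAux.psum f₀ q)) p₂)
  -- boundedness of f₀ on [0,1]
  have hsvnf : ENNReal.ofReal |f₀ 0| +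
      (⨆ p : HAL1.Partition1, ENNReal.ofReal (HALAux.psum f₀ p)) ≤ ENNReal.ofReal M := hf₀.2
  have hM0 : |f₀ 0| ≤ M :=
    (ENNReal.ofReal_le_ofReal_iff hM.le).mp (le_trans le_self_add hsvnf)
  have hvar : ∀ p : HAL1.Partition1, HALAux.psum f₀ p ≤ M := by
    intro p
    refine (ENNReal.ofReal_le_ofReal_iff hM.le).mp (le_trans (le_trans ?_ le_add_self) hsvnf)
    exact le_iSup (fun q : HAL1.Partition1 => ENNReal.ofReal (HALAux.psum f₀ q)) p
  have hbd : ∀ u ∈ Set.Icc (0:ℝ) 1, |f₀ u| ≤ 2 * M := by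
    intro u hu
    rcases eq_or_lt_of_le hu.1 with h0 | h0
    · rw [← h0]; linarith
    rcases eq_or_lt_of_le hu.2 with h1 | h1
    · -- u = 1
      set tf : ℕ → ℝ := fun k => if k = 0 then 0 else 1 with htf
      have htf0 : tf 0 = 0 := by simp [htf]
      have htf1 : tf 1 = 1 := by simp [htf]
      have pmono : ∀ i : ℕ, i < 1 → tf i < tf (i + 1) := by
        intro i hi
        have hi0 : i = 0 := by omega
        subst hi0
        rw [htf0, htf1]; norm_num
      have hp := hvar ⟨1, tf, one_pos, htf0, htf1, pmono⟩
      have hcalc : HALAux.psum f₀ ⟨1, tf, one_pos, htf0, htf1, pmono⟩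
          = |f₀ (tf 1) - f₀ (tf 0)| := by
        simp [HALAux.psum]
      rw [hcalc, htf0, htf1] at hp
      have h3 := abs_sub_abs_le_abs_sub (f₀ 1) (f₀ 0)
      rw [h1]
      linarith
    · -- 0 < u < 1
      set tf : ℕ → ℝ := fun k => if k = 0 then 0 else if k = 1 then u else 1 with htf
      have htf0 : tf 0 = 0 := by simp [htf]
      have htf1 : tf 1 = u := by simp [htf]
      have htf2 : tf 2 = 1 := by simp [htf]
      have pmono : ∀ i : ℕ, i < 2 → tf i < tf (i + 1) := by
        intro i hi
        interval_cases i
        · rw [htf0, htf1]; exact h0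
        · rw [htf1, htf2]; exact h1
      have hp := hvar ⟨2, tf, two_pos, htf0, htf2, pmono⟩
      have hcalc : HALAux.psum f₀ ⟨2, tf, two_pos, htf0, htf2, pmono⟩
          = |f₀ (tf 1) - f₀ (tf 0)| + |f₀ (tf 2) - f₀ (tf 1)| := by
        simp [HALAux.psum, Finset.sum_range_succ]
      rw [hcalc, htf0, htf1, htf2] at hp
      have h3 := abs_sub_abs_le_abs_sub (f₀ u) (f₀ 0)
      have h4 := abs_nonneg (f₀ 1 - f₀ u)
      linarith
  -- measurable versions
  set F : ℝ → ℝ := fun u => if u ∈ Set.Icc (0:ℝ) 1 then f₀ u else 0 with hFdef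
  have hFmeas : Measurable F := HALAux.meas_of_cadlag f₀ hcadf
  set G : ℝ → ℝ := fun u => if u ∈ Set.Ico s tn then min (F u) b else F u with hGdef
  have hGmeas : Measurable G :=
    Measurable.ite measurableSet_Ico (hFmeas.min measurable_const) hFmeas
  have hFval : ∀ u ∈ Set.Icc (0:ℝ) 1, F u = f₀ u := by
    intro u hu; simp only [hFdef]; rw [if_pos hu]
  have hGval : ∀ u ∈ Set.Icc (0:ℝ) 1, G u = g u := by
    intro u hu
    by_cases h : u ∈ Set.Ico s tn
    · simp only [hGdef, hgdef]
      rw [if_pos h, if_pos (Set.mem_Ico.mp h), hFval u hu]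
    · simp only [hGdef, hgdef]
      rw [if_neg h, if_neg (fun hc => h (Set.mem_Ico.mpr hc)), hFval u hu]
  have hFle : ∀ u, F u ≤ 2 * M := by
    intro u
    by_cases hu : u ∈ Set.Icc (0:ℝ) 1
    · rw [hFval u hu]; exact le_trans (le_abs_self _) (hbd u hu)
    · simp only [hFdef]; rw [if_neg hu]; linarith
  have hGleF : ∀ u, G u ≤ F u := by
    intro u
    by_cases h : u ∈ Set.Ico s tn
    · simp only [hGdef]; rw [if_pos h]; exact min_le_left _ _
    · simp only [hGdef]; rw [if_neg h]
  have hexpbF : ∀ u, ‖Real.exp (F u)‖ ≤ Real.exp (2 * M) := by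
    intro u
    rw [Real.norm_eq_abs, abs_of_pos (Real.exp_pos _)]
    exact Real.exp_le_exp.mpr (hFle u)
  have hexpbG : ∀ u, ‖Real.exp (G u)‖ ≤ Real.exp (2 * M) := by
    intro u
    rw [Real.norm_eq_abs, abs_of_pos (Real.exp_pos _)]
    exact Real.exp_le_exp.mpr (le_trans (hGleF u) (hFle u))
  have hintF : ∀ c : ℝ, 0 ≤ c →
      IntervalIntegrable (fun u => Real.exp (F u)) MeasureTheory.volume 0 c := by
    intro c hc
    rw [intervalIntegrable_iff_integrableOn_Ioc_of_le hc]
    refine Integrable.mono' (g := fun _ => Real.exp (2 * M)) ?_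
      ((Real.measurable_exp.comp hFmeas).aestronglyMeasurable)
      (Filter.Eventually.of_forall fun u => hexpbF u)
    exact integrableOn_const measure_Ioc_lt_top.ne
  have hintG : ∀ c : ℝ, 0 ≤ c →
      IntervalIntegrable (fun u => Real.exp (G u)) MeasureTheory.volume 0 c := by
    intro c hc
    rw [intervalIntegrable_iff_integrableOn_Ioc_of_le hc]
    refine Integrable.mono' (g := fun _ => Real.exp (2 * M)) ?_
      ((Real.measurable_exp.comp hGmeas).aestronglyMeasurable)
      (Filter.Eventually.of_forall fun u => hexpbG u)
    exact integrableOn_const measure_Ioc_lt_top.ne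
  -- rewriting interval integrals
  have hEqF : ∀ c ∈ Set.Icc (0:ℝ) 1,
      (∫ u in (0:ℝ)..c, Real.exp (f₀ u)) = ∫ u in (0:ℝ)..c, Real.exp (F u) := by
    intro c hc
    refine intervalIntegral.integral_congr ?_
    intro u hu
    rw [Set.uIcc_of_le hc.1] at hu
    dsimp only
    rw [hFval u ⟨hu.1, le_trans hu.2 hc.2⟩]
  have hEqG : ∀ c ∈ Set.Icc (0:ℝ) 1,
      (∫ u in (0:ℝ)..c, Real.exp (g u)) = ∫ u in (0:ℝ)..c, Real.exp (G u) := by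
    intro c hc
    refine intervalIntegral.integral_congr ?_
    intro u hu
    rw [Set.uIcc_of_le hc.1] at hu
    dsimp only
    rw [hGval u ⟨hu.1, le_trans hu.2 hc.2⟩]
  have hIle : ∀ c ∈ Set.Icc (0:ℝ) 1,
      (∫ u in (0:ℝ)..c, Real.exp (g u)) ≤ ∫ u in (0:ℝ)..c, Real.exp (f₀ u) := by
    intro c hc
    rw [hEqF c hc, hEqG c hc]
    exact intervalIntegral.integral_mono_on hc.1 (hintG c hc.1) (hintF c hc.1)
      (fun x _ => Real.exp_le_exp.mpr (hGleF x))
  -- strict inequality at tn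
  have htn_mem01 : tn ∈ Set.Icc (0:ℝ) 1 := ⟨htn01.1.le, htn01.2⟩
  have hIstrict : (∫ u in (0:ℝ)..tn, Real.exp (g u)) < ∫ u in (0:ℝ)..tn, Real.exp (f₀ u) := by
    rw [hEqF tn htn_mem01, hEqG tn htn_mem01]
    have hintF' := hintF tn htn01.1.le
    have hintG' := hintG tn htn01.1.le
    have hsub : (∫ u in (0:ℝ)..tn, (Real.exp (F u) - Real.exp (G u)))
        = (∫ u in (0:ℝ)..tn, Real.exp (F u)) - ∫ u in (0:ℝ)..tn, Real.exp (G u) :=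
      intervalIntegral.integral_sub hintF' hintG'
    have hpos : 0 < ∫ u in (0:ℝ)..tn, (Real.exp (F u) - Real.exp (G u)) := by
      rw [intervalIntegral.integral_of_le htn01.1.le]
      have hioF : IntegrableOn (fun u => Real.exp (F u)) (Set.Ioc 0 tn) MeasureTheory.volume := by
        rw [intervalIntegrable_iff_integrableOn_Ioc_of_le htn01.1.le] at hintF'
        exact hintF'
      have hioG : IntegrableOn (fun u => Real.exp (G u)) (Set.Ioc 0 tn) MeasureTheory.volume := by
        rw [intervalIntegrable_iff_integrableOn_Ioc_of_le htn01.1.le] at hintG'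
        exact hintG'
      have hioH : IntegrableOn (fun u => Real.exp (F u) - Real.exp (G u)) (Set.Ioc 0 tn)
          MeasureTheory.volume := hioF.sub hioG
      have hnn : ∀ u : ℝ, 0 ≤ Real.exp (F u) - Real.exp (G u) := by
        intro u
        have := Real.exp_le_exp.mpr (hGleF u); linarith
      have hss : Set.Ico s (tj + δ) ⊆ Set.Ioc 0 tn := by
        rintro x ⟨hx1, hx2⟩
        exact ⟨lt_of_lt_of_le hs0 hx1, by linarith⟩
      have hlow : ∀ x ∈ Set.Ico s (tj + δ),
          Real.exp ((a + b) / 2) - Real.exp b ≤ Real.exp (F x) - Real.exp (G x) := by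
        rintro x ⟨hx1, hx2⟩
        have hx01 : x ∈ Set.Icc (0:ℝ) 1 :=
          ⟨le_trans hs0.le hx1, by linarith [htn01.2]⟩
        have hxgt : (a + b) / 2 < f₀ x := hδgt x ⟨by linarith, hx2.le⟩
        have hFx : F x = f₀ x := hFval x hx01
        have hGx : G x = b := by
          have hmem : x ∈ Set.Ico s tn := ⟨hx1, by linarith⟩
          simp only [hGdef]
          rw [if_pos hmem, hFx, min_eq_right (by linarith)]
        rw [hFx, hGx]
        have := Real.exp_le_exp.mpr hxgt.le
        linarith
      have hvolne : MeasureTheory.volume (Set.Ico s (tj + δ)) ≠ ⊤ := by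
        rw [Real.volume_Ico]; exact ENNReal.ofReal_ne_top
      have h1 := setIntegral_ge_of_const_le (μ := MeasureTheory.volume)
        measurableSet_Ico hvolne hlow (hioH.mono_set hss)
      have hvol : (MeasureTheory.volume (Set.Ico s (tj + δ))).toReal = δ / 2 := by
        rw [Real.volume_Ico, ENNReal.toReal_ofReal (by rw [hsdef]; linarith)]
        rw [hsdef]; ring
      rw [measureReal_def, hvol, smul_eq_mul] at h1
      have h2 : (∫ u in Set.Ico s (tj + δ), (Real.exp (F u) - Real.exp (G u)))
          ≤ ∫ u in Set.Ioc 0 tn, (Real.exp (F u) - Real.exp (G u)) :=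
        setIntegral_mono_set hioH (Filter.Eventually.of_forall fun u => hnn u)
          (HasSubset.Subset.eventuallyLE hss)
      have hc0 : 0 < Real.exp ((a + b) / 2) - Real.exp b := by
        have := Real.exp_lt_exp.mpr (show b < (a + b) / 2 by linarith)
        linarith
      nlinarith [mul_pos hc0 (show (0:ℝ) < δ / 2 by linarith)]
    linarith
  -- g agrees with f₀ at observed times
  have hgT : ∀ i, g (T i) = f₀ (T i) := by
    intro i
    rcases lt_or_ge (T i) s with h | h
    · exact hg_lt _ h
    rcases lt_or_ge (T i) tn with h2 | h2
    · exact absurd ⟨lt_of_lt_of_le hs_tj h, h2⟩ (hcons i)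
    · exact hg_ge _ h2
  -- strict risk comparison
  have hrisk : HAL1.survRisk n T Δ g < HAL1.survRisk n T Δ f₀ := by
    have hsum : (∑ i, ((∫ u in (0:ℝ)..(T i), Real.exp (g u)) - Δ i * g (T i)))
        < ∑ i, ((∫ u in (0:ℝ)..(T i), Real.exp (f₀ u)) - Δ i * f₀ (T i)) := by
      refine Finset.sum_lt_sum (fun i _ => ?_) ⟨i₀, Finset.mem_univ i₀, ?_⟩
      · rw [hgT i]
        exact sub_le_sub_right (hIle (T i) ⟨(hT i).1.le, (hT i).2⟩) _
      · rw [hgT i₀, hTi₀]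
        exact sub_lt_sub_right hIstrict _
    have hn0 : (0:ℝ) < 1 / n := by
      have h1 : (0:ℝ) < n := by exact_mod_cast Nat.lt_of_lt_of_le Nat.zero_lt_one hn
      positivity
    exact mul_lt_mul_of_pos_left hsum hn0
  have hgD1 : g ∈ HAL1.D1 M := ⟨hgcad, hsvn_g⟩
  refine ⟨⟨g, hgD1, hrisk⟩, ?_⟩
  intro hmin
  exact absurd (hmin g hgD1) (not_le.mpr hrisk)
end
end

section
/- Fix an integer d ≥ 1, ε > 0 and M < ∞. Let p, q : [0,1+ε] × [0,1]^{d−1} → [0,∞) be measurable with ∫_0^{1+ε} p(u,w) du = ∫_0^{1+ε} q(u,w) du = 1 for every w ∈ [0,1]^{d−1}. Define S_p(t,w) = 1 − ∫_0^t p(u,w) du and S_q(t,w) = 1 − ∫_0^t q(u,w) du, and the hazards h_p = p/S_p, h_q = q/S_q. Assume S_p(t,w) > 0, S_q(t,w) > 0, h_p(t,w) ≤ M and h_q(t,w) ≤ M for all t ∈ [0,1] and w ∈ [0,1]^{d−1}. Then ‖S_q − S_p‖_λ ≤ ‖h_q − h_p‖_λ. -/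
open MeasureTheory Filter Set

noncomputable section

namespace HAL

/-- The conditional survival function `S_p(t, w) = 1 − ∫_0^t p(u, w) du` associated with
the conditional density `p`. -/
def Surv {d : ℕ} (p : ℝ → (Fin d → ℝ) → ℝ) (t : ℝ) (w : Fin d → ℝ) : ℝ :=
  1 - ∫ u in (0:ℝ)..t, p u w

/-- The conditional hazard function `h_p = p / S_p` associated with the conditional
density `p`. -/
def haz {d : ℕ} (p : ℝ → (Fin d → ℝ) → ℝ) (t : ℝ) (w : Fin d → ℝ) : ℝ :=
  p t w / Surv p t w

/-- The `L²` norm `‖F‖_λ = (∫_{[0,1]^d} ∫_0^1 F(t,w)² dt dw)^{1/2}` with respect to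
Lebesgue measure on `[0,1]^{d+1}`. -/
def L2cube {d : ℕ} (F : ℝ → (Fin d → ℝ) → ℝ) : ℝ :=
  Real.sqrt (∫ w in Set.Icc (0 : Fin d → ℝ) 1, ∫ t in Set.Icc (0:ℝ) 1, (F t w) ^ 2)

end HAL




/-- Elementary log inequalities: for `0 < y ≤ x`,
`(x - y)/x ≤ log x - log y ≤ (x - y)/y`. -/
lemma HALaux.log_sandwich {x y : ℝ} (hy : 0 < y) (hxy : y ≤ x) :
    (x - y) / x ≤ Real.log x - Real.log y ∧ Real.log x - Real.log y ≤ (x - y) / y := by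
  have hx : 0 < x := hy.trans_le hxy
  constructor
  · have h := Real.log_le_sub_one_of_pos (show (0:ℝ) < y / x by positivity)
    rw [Real.log_div hy.ne' hx.ne'] at h
    have h2 : y / x - 1 = -((x - y) / x) := by field_simp; ring
    rw [h2] at h
    linarith
  · have h := Real.log_le_sub_one_of_pos (show (0:ℝ) < x / y by positivity)
    rw [Real.log_div hx.ne' hy.ne'] at h
    have h2 : x / y - 1 = (x - y) / y := by field_simp
    linarith

/-- For `0 < a ≤ b ≤ 1` we have `b - a ≤ log b - log a`. -/
lemma HALaux.sub_le_log_sub {a b : ℝ} (ha : 0 < a) (hab : a ≤ b) (hb1 : b ≤ 1) :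
    b - a ≤ Real.log b - Real.log a := by
  have hb : 0 < b := ha.trans_le hab
  have h := (HALaux.log_sandwich ha hab).1
  have h2 : b - a ≤ (b - a) / b := by
    rw [le_div_iff₀ hb]
    nlinarith
  linarith

/-- Jensen: on a probability space, `(∫ g)^2 ≤ ∫ g^2`. -/
lemma HALaux.sq_integral_le {α : Type*} [MeasurableSpace α] {μ : Measure α}
    [IsProbabilityMeasure μ] {g : α → ℝ} (hg : Integrable g μ)
    (hg2 : Integrable (fun x => g x ^ 2) μ) :
    (∫ x, g x ∂μ) ^ 2 ≤ ∫ x, g x ^ 2 ∂μ := by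
  set m := ∫ x, g x ∂μ with hm
  have h0 : 0 ≤ ∫ x, (g x - m) ^ 2 ∂μ := integral_nonneg fun x => sq_nonneg _
  have hexp : ∫ x, (g x - m) ^ 2 ∂μ = (∫ x, g x ^ 2 ∂μ) - 2 * m * m + m ^ 2 := by
    have hfun : (fun x => (g x - m) ^ 2) = fun x => (g x ^ 2 - 2 * m * g x) + m ^ 2 := by
      funext x; ring
    rw [hfun, integral_add ((hg2.sub (hg.const_mul (2 * m))).congr (by filter_upwards with x; simp [mul_comm])) (integrable_const _),
      integral_sub hg2 (hg.const_mul (2 * m)), integral_const_mul, integral_const]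
    simp [measure_univ, ← hm]
    try ring
  nlinarith [h0, hexp]


lemma HALaux.integral_div_surv (f : ℝ → ℝ) (hf : Measurable f) (T M : ℝ) (hT : 0 ≤ T)
    (hf0 : ∀ u ∈ Set.Icc (0:ℝ) T, 0 ≤ f u) (hfM : ∀ u ∈ Set.Icc (0:ℝ) T, f u ≤ M)
    (hS : ∀ u ∈ Set.Icc (0:ℝ) T, 0 < 1 - ∫ v in (0:ℝ)..u, f v) :
    ∫ u in (0:ℝ)..T, f u / (1 - ∫ v in (0:ℝ)..u, f v)
      = - Real.log (1 - ∫ v in (0:ℝ)..T, f v) := by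
  set S : ℝ → ℝ := fun u => 1 - ∫ v in (0:ℝ)..u, f v with hSdef
  have h0T : (0:ℝ) ∈ Set.Icc (0:ℝ) T := ⟨le_rfl, hT⟩
  have hM0 : 0 ≤ M := le_trans (hf0 0 h0T) (hfM 0 h0T)
  have hST : 0 < S T := hS T ⟨hT, le_rfl⟩
  have hfint : IntegrableOn f (Set.Icc (0:ℝ) T) := by
    refine Integrable.mono' (g := fun _ => M) ?_ hf.aestronglyMeasurable.restrict ?_
    · exact (integrableOn_const_iff enorm_ne_top).2 (Or.inr isCompact_Icc.measure_lt_top)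
    · exact ae_restrict_of_forall_mem measurableSet_Icc fun u hu => by
        rw [Real.norm_eq_abs, abs_of_nonneg (hf0 u hu)]; exact hfM u hu
  have hfii : ∀ a b, a ∈ Set.Icc (0:ℝ) T → b ∈ Set.Icc (0:ℝ) T →
      IntervalIntegrable f volume a b := fun a b ha hb =>
    (hfint.mono_set (Set.uIcc_subset_Icc ha hb)).intervalIntegrable
  have hdiff : ∀ a b, a ∈ Set.Icc (0:ℝ) T → b ∈ Set.Icc (0:ℝ) T →
      S a - S b = ∫ v in a..b, f v := by
    intro a b ha hb
    have := intervalIntegral.integral_add_adjacent_intervals (hfii 0 a h0T ha) (hfii a b ha hb)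
    simp only [hSdef]
    linarith
  have hSmono : ∀ a b, a ∈ Set.Icc (0:ℝ) T → b ∈ Set.Icc (0:ℝ) T → a ≤ b → S b ≤ S a := by
    intro a b ha hb hab
    have h1 := hdiff a b ha hb
    have h2 : 0 ≤ ∫ v in a..b, f v :=
      intervalIntegral.integral_nonneg hab fun u hu =>
        hf0 u ⟨ha.1.trans hu.1, hu.2.trans hb.2⟩
    linarith
  have hS0 : S 0 = 1 := by simp [hSdef]
  have hSpos : ∀ u ∈ Set.Icc (0:ℝ) T, 0 < S u := hS
  have hScont : ContinuousOn S (Set.Icc (0:ℝ) T) := by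
    have h2 : ContinuousOn (fun u => ∫ v in (0:ℝ)..u, f v) (Set.Icc (0:ℝ) T) := by
      have h3 := intervalIntegral.continuousOn_primitive_interval
        (a := (0:ℝ)) (b := T) (f := f) (μ := volume) (by rwa [Set.uIcc_of_le hT])
      rwa [Set.uIcc_of_le hT] at h3
    exact continuousOn_const.sub h2
  set g : ℝ → ℝ := fun u => f u / S u with hgdef
  have hgint : IntegrableOn g (Set.Icc (0:ℝ) T) := by
    refine Integrable.mono' (g := fun _ => M / S T) ?_ ?_ ?_
    · exact (integrableOn_const_iff enorm_ne_top).2 (Or.inr isCompact_Icc.measure_lt_top)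
    · exact (hf.aemeasurable.restrict.div
        (hScont.aemeasurable measurableSet_Icc)).aestronglyMeasurable
    · refine ae_restrict_of_forall_mem measurableSet_Icc fun u hu => ?_
      have hSu := hSpos u hu
      rw [Real.norm_eq_abs, abs_of_nonneg (div_nonneg (hf0 u hu) hSu.le)]
      exact div_le_div₀ hM0 (hfM u hu) hST (hSmono u T hu ⟨hT, le_rfl⟩ hu.2)
  have hgii : ∀ a b, a ∈ Set.Icc (0:ℝ) T → b ∈ Set.Icc (0:ℝ) T →
      IntervalIntegrable g volume a b := fun a b ha hb =>
    (hgint.mono_set (Set.uIcc_subset_Icc ha hb)).intervalIntegrable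
  set X : ℝ := (∫ u in (0:ℝ)..T, g u) + Real.log (S T) with hX
  have key : ∀ N : ℕ, 0 < N → |X| ≤ (M * T / S T) / N := by
    intro N hN
    have hNR : (0:ℝ) < N := Nat.cast_pos.2 hN
    set a : ℕ → ℝ := fun k => k * T / N with ha
    have ha0 : a 0 = 0 := by simp [ha]
    have haN : a N = T := by simp only [ha]; field_simp
    have hamem : ∀ k, k ≤ N → a k ∈ Set.Icc (0:ℝ) T := by
      intro k hk
      constructor
      · positivity
      · rw [div_le_iff₀ hNR]
        have h4 : (k:ℝ) ≤ N := Nat.cast_le.2 hk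
        nlinarith
    have hamono : ∀ k, a k ≤ a (k + 1) := by
      intro k
      apply div_le_div_of_nonneg_right ?_ hNR.le
      push_cast
      nlinarith [Nat.cast_nonneg (α := ℝ) k, hT]
    have hstep : ∀ k : ℕ, a (k + 1) - a k = T / N := by
      intro k; simp only [ha]; push_cast; field_simp; ring
    set b : ℕ → ℝ := fun k => ∫ v in a k..a (k+1), f v with hb
    have hbS : ∀ k, k < N → b k = S (a k) - S (a (k+1)) := fun k hk =>
      (hdiff _ _ (hamem k hk.le) (hamem (k+1) hk)).symm
    have hbnn : ∀ k, k < N → 0 ≤ b k := fun k hk =>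
      intervalIntegral.integral_nonneg (hamono k) fun u hu =>
        hf0 u ⟨(hamem k hk.le).1.trans hu.1, hu.2.trans (hamem (k+1) hk).2⟩
    have hbM : ∀ k, k < N → b k ≤ M * T / N := by
      intro k hk
      have h1 : b k ≤ ∫ _ in a k..a (k+1), M := by
        apply intervalIntegral.integral_mono_on (hamono k)
          (hfii _ _ (hamem k hk.le) (hamem (k+1) hk)) intervalIntegrable_const
        intro u hu
        exact hfM u ⟨(hamem k hk.le).1.trans hu.1, hu.2.trans (hamem (k+1) hk).2⟩
      rw [intervalIntegral.integral_const, hstep k, smul_eq_mul] at h1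
      calc b k ≤ T / N * M := h1
        _ = M * T / N := by ring
    set L : ℝ := ∑ k ∈ Finset.range N, b k / S (a k) with hL
    set U : ℝ := ∑ k ∈ Finset.range N, b k / S (a (k+1)) with hU
    have hIsum : (∫ u in (0:ℝ)..T, g u) = ∑ k ∈ Finset.range N, ∫ u in a k..a (k+1), g u := by
      rw [intervalIntegral.sum_integral_adjacent_intervals
        (fun k hk => hgii _ _ (hamem k hk.le) (hamem (k+1) hk)), ha0, haN]
    have hIL : L ≤ ∫ u in (0:ℝ)..T, g u := by
      rw [hIsum, hL]
      refine Finset.sum_le_sum fun k hk => ?_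
      rw [Finset.mem_range] at hk
      have hmemk := hamem k hk.le
      have hmemk1 := hamem (k+1) hk
      have hSk := hSpos _ hmemk
      have h5 : b k / S (a k) = ∫ u in a k..a (k+1), f u / S (a k) := by
        rw [intervalIntegral.integral_div]
      rw [h5]
      apply intervalIntegral.integral_mono_on (hamono k)
        ((hfii _ _ hmemk hmemk1).div_const _) (hgii _ _ hmemk hmemk1)
      intro u hu
      have humem : u ∈ Set.Icc (0:ℝ) T := ⟨hmemk.1.trans hu.1, hu.2.trans hmemk1.2⟩
      have hSu := hSpos u humem
      have hmon := hSmono (a k) u hmemk humem hu.1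
      exact div_le_div_of_nonneg_left (hf0 u humem) hSu hmon
    have hIU : (∫ u in (0:ℝ)..T, g u) ≤ U := by
      rw [hIsum, hU]
      refine Finset.sum_le_sum fun k hk => ?_
      rw [Finset.mem_range] at hk
      have hmemk := hamem k hk.le
      have hmemk1 := hamem (k+1) hk
      have hSk1 := hSpos _ hmemk1
      have h5 : b k / S (a (k+1)) = ∫ u in a k..a (k+1), f u / S (a (k+1)) := by
        rw [intervalIntegral.integral_div]
      rw [h5]
      apply intervalIntegral.integral_mono_on (hamono k)
        (hgii _ _ hmemk hmemk1) ((hfii _ _ hmemk hmemk1).div_const _)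
      intro u hu
      have humem : u ∈ Set.Icc (0:ℝ) T := ⟨hmemk.1.trans hu.1, hu.2.trans hmemk1.2⟩
      have hSu := hSpos u humem
      have hmon := hSmono u (a (k+1)) humem hmemk1 hu.2
      exact div_le_div_of_nonneg_left (hf0 u humem) hSk1 hmon
    have hlogsum : - Real.log (S T)
        = ∑ k ∈ Finset.range N, (Real.log (S (a k)) - Real.log (S (a (k+1)))) := by
      rw [Finset.sum_range_sub' (fun k => Real.log (S (a k))) N, ha0, haN, hS0, Real.log_one]
      ring
    have hlogL : L ≤ - Real.log (S T) := by
      rw [hlogsum, hL]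
      refine Finset.sum_le_sum fun k hk => ?_
      rw [Finset.mem_range] at hk
      have hx := hSpos _ (hamem k hk.le)
      have hy := hSpos _ (hamem (k+1) hk)
      have hyx := hSmono (a k) (a (k+1)) (hamem k hk.le) (hamem (k+1) hk) (hamono k)
      have := (HALaux.log_sandwich hy hyx).1
      rw [hbS k hk]
      linarith
    have hlogU : - Real.log (S T) ≤ U := by
      rw [hlogsum, hU]
      refine Finset.sum_le_sum fun k hk => ?_
      rw [Finset.mem_range] at hk
      have hy := hSpos _ (hamem (k+1) hk)
      have hyx := hSmono (a k) (a (k+1)) (hamem k hk.le) (hamem (k+1) hk) (hamono k)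
      have := (HALaux.log_sandwich hy hyx).2
      rw [hbS k hk]
      linarith
    have hgap : U - L ≤ (M * T / S T) / N := by
      have h6 : U - L ≤ (M * T / N) * ((S T)⁻¹ - (S 0)⁻¹) := by
        have h7 : U - L = ∑ k ∈ Finset.range N,
            (b k * ((S (a (k+1)))⁻¹ - (S (a k))⁻¹)) := by
          rw [hU, hL, ← Finset.sum_sub_distrib]
          refine Finset.sum_congr rfl fun k _ => by
            rw [div_eq_mul_inv, div_eq_mul_inv]; ring
        have h8 : ∑ k ∈ Finset.range N, ((S (a (k+1)))⁻¹ - (S (a k))⁻¹)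
            = (S T)⁻¹ - (S 0)⁻¹ := by
          rw [Finset.sum_range_sub (fun k => (S (a k))⁻¹) N, ha0, haN]
        rw [h7, ← h8, Finset.mul_sum]
        refine Finset.sum_le_sum fun k hk => ?_
        rw [Finset.mem_range] at hk
        have hx := hSpos _ (hamem k hk.le)
        have hy := hSpos _ (hamem (k+1) hk)
        have hyx := hSmono (a k) (a (k+1)) (hamem k hk.le) (hamem (k+1) hk) (hamono k)
        have hinv : (S (a k))⁻¹ ≤ (S (a (k+1)))⁻¹ := by
          apply inv_anti₀ hy hyx
        apply mul_le_mul_of_nonneg_right (hbM k hk) (by linarith)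
      have h9 : (M * T / N) * ((S T)⁻¹ - (S 0)⁻¹) ≤ (M * T / N) * (S T)⁻¹ := by
        rw [hS0]
        apply mul_le_mul_of_nonneg_left (by norm_num) (by positivity)
      have h10 : (M * T / N) * (S T)⁻¹ = (M * T / S T) / N := by ring
      linarith
    have habs : |X| ≤ U - L := by
      rw [hX, abs_le]
      constructor <;> linarith
    linarith
  have hC : Tendsto (fun N : ℕ => (M * T / S T) / N) atTop (nhds 0) :=
    tendsto_const_div_atTop_nhds_zero_nat _
  have hXle : |X| ≤ 0 :=
    ge_of_tendsto hC (eventually_atTop.2 ⟨1, fun N hN => key N hN⟩)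
  have hX0 : X = 0 := abs_eq_zero.1 (le_antisymm hXle (abs_nonneg X))
  have : (∫ u in (0:ℝ)..T, g u) = - Real.log (S T) := by
    rw [hX] at hX0; linarith
  exact this

/-- `‖S_q − S_p‖_λ ≤ ‖h_q − h_p‖_λ`.  (The covariate space is `[0,1]^d`,
so the ambient dimension is `d + 1 ≥ 1`.) -/
theorem surv_diff_le_hazard_diff 
    (d : ℕ) (ε : ℝ) (hε : 0 < ε) (M : ℝ)
    (p q : ℝ → (Fin d → ℝ) → ℝ)
    (hpm : Measurable (Function.uncurry p)) (hqm : Measurable (Function.uncurry q))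
    (hpnn : ∀ u ∈ Set.Icc (0:ℝ) (1 + ε), ∀ w ∈ Set.Icc (0 : Fin d → ℝ) 1, 0 ≤ p u w)
    (hqnn : ∀ u ∈ Set.Icc (0:ℝ) (1 + ε), ∀ w ∈ Set.Icc (0 : Fin d → ℝ) 1, 0 ≤ q u w)
    (hpint : ∀ w ∈ Set.Icc (0 : Fin d → ℝ) 1, (∫ u in (0:ℝ)..(1 + ε), p u w) = 1)
    (hqint : ∀ w ∈ Set.Icc (0 : Fin d → ℝ) 1, (∫ u in (0:ℝ)..(1 + ε), q u w) = 1)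
    (hSp : ∀ t ∈ Set.Icc (0:ℝ) 1, ∀ w ∈ Set.Icc (0 : Fin d → ℝ) 1, 0 < HAL.Surv p t w)
    (hSq : ∀ t ∈ Set.Icc (0:ℝ) 1, ∀ w ∈ Set.Icc (0 : Fin d → ℝ) 1, 0 < HAL.Surv q t w)
    (hhp : ∀ t ∈ Set.Icc (0:ℝ) 1, ∀ w ∈ Set.Icc (0 : Fin d → ℝ) 1, HAL.haz p t w ≤ M)
    (hhq : ∀ t ∈ Set.Icc (0:ℝ) 1, ∀ w ∈ Set.Icc (0 : Fin d → ℝ) 1, HAL.haz q t w ≤ M) :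
    HAL.L2cube (fun t w => HAL.Surv q t w - HAL.Surv p t w) ≤
      HAL.L2cube (fun t w => HAL.haz q t w - HAL.haz p t w) := by
  classical
  have hWmeas : MeasurableSet (Set.Icc (0 : Fin d → ℝ) 1) := measurableSet_Icc
  have h0W : (0 : Fin d → ℝ) ∈ Set.Icc (0 : Fin d → ℝ) 1 := Set.mem_Icc.2 ⟨le_rfl, zero_le_one⟩
  have h01 : (0:ℝ) ∈ Set.Icc (0:ℝ) 1 := ⟨le_rfl, zero_le_one⟩
  have h1ε : (1:ℝ) ≤ 1 + ε := by linarith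
  have hM0 : 0 ≤ M :=
    le_trans (div_nonneg (hpnn 0 ⟨le_rfl, by linarith⟩ 0 h0W) (hSp 0 h01 0 h0W).le)
      (hhp 0 h01 0 h0W)
  haveI hprob : IsProbabilityMeasure (volume.restrict (Set.Icc (0:ℝ) 1)) :=
    ⟨by simp [Measure.restrict_apply_univ, Real.volume_Icc]⟩
  -- jointly measurable primitives
  have hGmk : ∀ r : ℝ → (Fin d → ℝ) → ℝ, Measurable (Function.uncurry r) →
      Measurable (fun x : ℝ × (Fin d → ℝ) =>
        ∫ u, Set.indicator (Set.Ioc (0:ℝ) x.1) (fun v => r v x.2) u) := by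
    intro r hrm
    apply StronglyMeasurable.measurable
    apply MeasureTheory.StronglyMeasurable.integral_prod_right'
      (f := fun z : (ℝ × (Fin d → ℝ)) × ℝ =>
        Set.indicator (Set.Ioc (0:ℝ) z.1.1) (fun v => r v z.1.2) z.2)
    apply Measurable.stronglyMeasurable
    have heq : (fun z : (ℝ × (Fin d → ℝ)) × ℝ =>
        Set.indicator (Set.Ioc (0:ℝ) z.1.1) (fun v => r v z.1.2) z.2)
        = Set.indicator {z : (ℝ × (Fin d → ℝ)) × ℝ | 0 < z.2 ∧ z.2 ≤ z.1.1}
            (fun z => r z.2 z.1.2) := by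
      funext z
      simp only [Set.indicator_apply, Set.mem_Ioc, Set.mem_setOf_eq]
    rw [heq]
    apply Measurable.indicator
    · exact hrm.comp (measurable_snd.prodMk measurable_fst.snd)
    · exact (measurableSet_lt measurable_const measurable_snd).inter
        (measurableSet_le measurable_snd (measurable_fst.comp measurable_fst))
  set Gp : ℝ × (Fin d → ℝ) → ℝ := fun x =>
    ∫ u, Set.indicator (Set.Ioc (0:ℝ) x.1) (fun v => p v x.2) u with hGpdef
  set Gq : ℝ × (Fin d → ℝ) → ℝ := fun x =>
    ∫ u, Set.indicator (Set.Ioc (0:ℝ) x.1) (fun v => q v x.2) u with hGqdef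
  set Fp : ℝ × (Fin d → ℝ) → ℝ := fun x => p x.1 x.2 / (1 - Gp x) with hFpdef
  set Fq : ℝ × (Fin d → ℝ) → ℝ := fun x => q x.1 x.2 / (1 - Gq x) with hFqdef
  have hFpm : Measurable Fp := hpm.div (measurable_const.sub (hGmk p hpm))
  have hFqm : Measurable Fq := hqm.div (measurable_const.sub (hGmk q hqm))
  have hSGp : ∀ t : ℝ, 0 ≤ t → ∀ w, HAL.Surv p t w = 1 - Gp (t, w) := by
    intro t ht w
    rw [HAL.Surv, hGpdef]
    congr 1
    rw [intervalIntegral.integral_of_le ht]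
    exact (MeasureTheory.integral_indicator measurableSet_Ioc).symm
  have hSGq : ∀ t : ℝ, 0 ≤ t → ∀ w, HAL.Surv q t w = 1 - Gq (t, w) := by
    intro t ht w
    rw [HAL.Surv, hGqdef]
    congr 1
    rw [intervalIntegral.integral_of_le ht]
    exact (MeasureTheory.integral_indicator measurableSet_Ioc).symm
  have hhazFp : ∀ t : ℝ, 0 ≤ t → ∀ w, HAL.haz p t w = Fp (t, w) := by
    intro t ht w
    rw [HAL.haz, hFpdef, hSGp t ht w]
  have hhazFq : ∀ t : ℝ, 0 ≤ t → ∀ w, HAL.haz q t w = Fq (t, w) := by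
    intro t ht w
    rw [HAL.haz, hFqdef, hSGq t ht w]
  -- pointwise bound on the hazard difference
  have hhaznn : ∀ w ∈ Set.Icc (0 : Fin d → ℝ) 1, ∀ t ∈ Set.Icc (0:ℝ) 1,
      0 ≤ HAL.haz p t w ∧ 0 ≤ HAL.haz q t w := by
    intro w hw t ht
    constructor
    · exact div_nonneg (hpnn t ⟨ht.1, ht.2.trans h1ε⟩ w hw) (hSp t ht w hw).le
    · exact div_nonneg (hqnn t ⟨ht.1, ht.2.trans h1ε⟩ w hw) (hSq t ht w hw).le
  have hdiffM : ∀ w ∈ Set.Icc (0 : Fin d → ℝ) 1, ∀ t ∈ Set.Icc (0:ℝ) 1,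
      |HAL.haz q t w - HAL.haz p t w| ≤ M := by
    intro w hw t ht
    have h1 := (hhaznn w hw t ht).1
    have h2 := (hhaznn w hw t ht).2
    have h3 := hhp t ht w hw
    have h4 := hhq t ht w hw
    rw [abs_le]
    constructor <;> linarith
  -- the per-covariate inequality
  have main : ∀ w ∈ Set.Icc (0 : Fin d → ℝ) 1,
      (∫ t in Set.Icc (0:ℝ) 1, (HAL.Surv q t w - HAL.Surv p t w) ^ 2)
        ≤ ∫ t in Set.Icc (0:ℝ) 1, (HAL.haz q t w - HAL.haz p t w) ^ 2 := by
    intro w hw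
    have hp0 : ∀ u ∈ Set.Icc (0:ℝ) 1, 0 ≤ p u w := fun u hu =>
      hpnn u ⟨hu.1, hu.2.trans h1ε⟩ w hw
    have hq0 : ∀ u ∈ Set.Icc (0:ℝ) 1, 0 ≤ q u w := fun u hu =>
      hqnn u ⟨hu.1, hu.2.trans h1ε⟩ w hw
    have hSple : ∀ t ∈ Set.Icc (0:ℝ) 1, HAL.Surv p t w ≤ 1 := by
      intro t ht
      rw [HAL.Surv]
      have h5 : 0 ≤ ∫ u in (0:ℝ)..t, p u w :=
        intervalIntegral.integral_nonneg ht.1 fun u hu => hp0 u ⟨hu.1, hu.2.trans ht.2⟩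
      linarith
    have hSqle : ∀ t ∈ Set.Icc (0:ℝ) 1, HAL.Surv q t w ≤ 1 := by
      intro t ht
      rw [HAL.Surv]
      have h5 : 0 ≤ ∫ u in (0:ℝ)..t, q u w :=
        intervalIntegral.integral_nonneg ht.1 fun u hu => hq0 u ⟨hu.1, hu.2.trans ht.2⟩
      linarith
    have hpleM : ∀ u ∈ Set.Icc (0:ℝ) 1, p u w ≤ M := by
      intro u hu
      have h := hhp u hu w hw
      rw [HAL.haz, div_le_iff₀ (hSp u hu w hw)] at h
      nlinarith [hSple u hu, (hSp u hu w hw)]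
    have hqleM : ∀ u ∈ Set.Icc (0:ℝ) 1, q u w ≤ M := by
      intro u hu
      have h := hhq u hu w hw
      rw [HAL.haz, div_le_iff₀ (hSq u hu w hw)] at h
      nlinarith [hSqle u hu, (hSq u hu w hw)]
    have hkeyp : ∀ t ∈ Set.Icc (0:ℝ) 1,
        (∫ u in (0:ℝ)..t, HAL.haz p u w) = - Real.log (HAL.Surv p t w) := by
      intro t ht
      have h := HALaux.integral_div_surv (fun u => p u w)
        (hpm.comp (measurable_id.prodMk measurable_const)) t M ht.1
        (fun u hu => hp0 u ⟨hu.1, hu.2.trans ht.2⟩)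
        (fun u hu => hpleM u ⟨hu.1, hu.2.trans ht.2⟩)
        (fun u hu => by
          have := hSp u ⟨hu.1, hu.2.trans ht.2⟩ w hw
          rwa [HAL.Surv] at this)
      simpa [HAL.haz, HAL.Surv] using h
    have hkeyq : ∀ t ∈ Set.Icc (0:ℝ) 1,
        (∫ u in (0:ℝ)..t, HAL.haz q u w) = - Real.log (HAL.Surv q t w) := by
      intro t ht
      have h := HALaux.integral_div_surv (fun u => q u w)
        (hqm.comp (measurable_id.prodMk measurable_const)) t M ht.1
        (fun u hu => hq0 u ⟨hu.1, hu.2.trans ht.2⟩)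
        (fun u hu => hqleM u ⟨hu.1, hu.2.trans ht.2⟩)
        (fun u hu => by
          have := hSq u ⟨hu.1, hu.2.trans ht.2⟩ w hw
          rwa [HAL.Surv] at this)
      simpa [HAL.haz, HAL.Surv] using h
    -- integrability of the hazards in t
    have hhpint : IntegrableOn (fun t => HAL.haz p t w) (Set.Icc (0:ℝ) 1) := by
      refine Integrable.mono' (g := fun _ => M)
        ((integrableOn_const_iff enorm_ne_top).2 (Or.inr isCompact_Icc.measure_lt_top)) ?_ ?_
      · exact ((hFpm.comp (measurable_id.prodMk measurable_const)).aestronglyMeasurable.restrict).congr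
          (ae_restrict_of_forall_mem measurableSet_Icc fun t ht => (hhazFp t ht.1 w).symm)
      · refine ae_restrict_of_forall_mem measurableSet_Icc fun t ht => ?_
        rw [Real.norm_eq_abs, abs_of_nonneg (hhaznn w hw t ht).1]
        exact hhp t ht w hw
    have hhqint : IntegrableOn (fun t => HAL.haz q t w) (Set.Icc (0:ℝ) 1) := by
      refine Integrable.mono' (g := fun _ => M)
        ((integrableOn_const_iff enorm_ne_top).2 (Or.inr isCompact_Icc.measure_lt_top)) ?_ ?_
      · exact ((hFqm.comp (measurable_id.prodMk measurable_const)).aestronglyMeasurable.restrict).congr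
          (ae_restrict_of_forall_mem measurableSet_Icc fun t ht => (hhazFq t ht.1 w).symm)
      · refine ae_restrict_of_forall_mem measurableSet_Icc fun t ht => ?_
        rw [Real.norm_eq_abs, abs_of_nonneg (hhaznn w hw t ht).2]
        exact hhq t ht w hw
    have hsubint : IntegrableOn (fun u => HAL.haz q u w - HAL.haz p u w)
        (Set.Icc (0:ℝ) 1) := by exact hhqint.sub hhpint
    set D : ℝ → ℝ := fun t => |HAL.haz q t w - HAL.haz p t w| with hDdef
    have hDint : IntegrableOn D (Set.Icc (0:ℝ) 1) := by exact hsubint.abs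
    have hDii : ∀ a b : ℝ, a ∈ Set.Icc (0:ℝ) 1 → b ∈ Set.Icc (0:ℝ) 1 →
        IntervalIntegrable D volume a b := fun a b ha hb =>
      (hDint.mono_set (Set.uIcc_subset_Icc ha hb)).intervalIntegrable
    set I : ℝ := ∫ t in (0:ℝ)..1, D t with hIdef
    have hI0 : 0 ≤ I :=
      intervalIntegral.integral_nonneg zero_le_one fun u _ => abs_nonneg _
    have hpt : ∀ t ∈ Set.Icc (0:ℝ) 1,
        (HAL.Surv q t w - HAL.Surv p t w) ^ 2 ≤ I ^ 2 := by
      intro t ht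
      have hsp := hSp t ht w hw
      have hsq := hSq t ht w hw
      have hsp1 := hSple t ht
      have hsq1 := hSqle t ht
      have habs : |HAL.Surv q t w - HAL.Surv p t w|
          ≤ |Real.log (HAL.Surv q t w) - Real.log (HAL.Surv p t w)| := by
        rcases le_total (HAL.Surv p t w) (HAL.Surv q t w) with h | h
        · have h6 := HALaux.sub_le_log_sub hsp h hsq1
          rw [abs_of_nonneg (by linarith), abs_of_nonneg (by linarith)]
          linarith
        · have h6 := HALaux.sub_le_log_sub hsq h hsp1
          rw [abs_of_nonpos (by linarith), abs_of_nonpos (by linarith)]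
          linarith
      have hlogeq : Real.log (HAL.Surv q t w) - Real.log (HAL.Surv p t w)
          = - ∫ u in (0:ℝ)..t, (HAL.haz q u w - HAL.haz p u w) := by
        rw [intervalIntegral.integral_sub
          ((hhqint.mono_set (Set.uIcc_subset_Icc h01 ht)).intervalIntegrable)
          ((hhpint.mono_set (Set.uIcc_subset_Icc h01 ht)).intervalIntegrable),
          hkeyq t ht, hkeyp t ht]
        ring
      have h2 : |∫ u in (0:ℝ)..t, (HAL.haz q u w - HAL.haz p u w)|
          ≤ ∫ u in (0:ℝ)..t, D u :=
        intervalIntegral.abs_integral_le_integral_abs ht.1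
      have h3 : (∫ u in (0:ℝ)..t, D u) ≤ I := by
        have hadd := intervalIntegral.integral_add_adjacent_intervals
          (hDii 0 t h01 ht) (hDii t 1 ht ⟨zero_le_one, le_rfl⟩)
        have h4 : 0 ≤ ∫ u in t..1, D u :=
          intervalIntegral.integral_nonneg ht.2 fun u _ => abs_nonneg _
        rw [hIdef]
        linarith
      have h5 : |HAL.Surv q t w - HAL.Surv p t w| ≤ I := by
        calc |HAL.Surv q t w - HAL.Surv p t w|
            ≤ |Real.log (HAL.Surv q t w) - Real.log (HAL.Surv p t w)| := habs
          _ = |∫ u in (0:ℝ)..t, (HAL.haz q u w - HAL.haz p u w)| := by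
              rw [hlogeq, abs_neg]
          _ ≤ ∫ u in (0:ℝ)..t, D u := h2
          _ ≤ I := h3
      have h7 := abs_le.1 h5
      exact sq_le_sq' (by linarith) h7.2
    -- step 1 : ∫ (Sq - Sp)² ≤ I²
    have step1 : (∫ t in Set.Icc (0:ℝ) 1, (HAL.Surv q t w - HAL.Surv p t w) ^ 2) ≤ I ^ 2 := by
      have h8 := integral_mono_of_nonneg (μ := volume.restrict (Set.Icc (0:ℝ) 1))
        (Eventually.of_forall fun t => sq_nonneg (HAL.Surv q t w - HAL.Surv p t w))
        (integrable_const (I ^ 2))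
        (ae_restrict_of_forall_mem measurableSet_Icc hpt)
      simpa [integral_const, measure_univ] using h8
    -- step 2 : I² ≤ ∫ (hq - hp)²
    have hIeq : I = ∫ t in Set.Icc (0:ℝ) 1, D t := by
      rw [hIdef, intervalIntegral.integral_of_le zero_le_one,
        MeasureTheory.integral_Icc_eq_integral_Ioc]
    have hD2int : IntegrableOn (fun t => D t ^ 2) (Set.Icc (0:ℝ) 1) := by
      refine Integrable.mono' (g := fun _ => M ^ 2)
        ((integrableOn_const_iff enorm_ne_top).2 (Or.inr isCompact_Icc.measure_lt_top)) ?_ ?_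
      · exact ((hDint.aestronglyMeasurable.aemeasurable.pow_const 2).aestronglyMeasurable)
      · refine ae_restrict_of_forall_mem measurableSet_Icc fun t ht => ?_
        rw [Real.norm_eq_abs, abs_of_nonneg (sq_nonneg _)]
        exact pow_le_pow_left₀ (abs_nonneg _) (hdiffM w hw t ht) 2
    have step2 : I ^ 2 ≤ ∫ t in Set.Icc (0:ℝ) 1, (HAL.haz q t w - HAL.haz p t w) ^ 2 := by
      have h9 := HALaux.sq_integral_le (μ := volume.restrict (Set.Icc (0:ℝ) 1))
        (g := D) hDint hD2int
      have h10 : (∫ t in Set.Icc (0:ℝ) 1, D t ^ 2)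
          = ∫ t in Set.Icc (0:ℝ) 1, (HAL.haz q t w - HAL.haz p t w) ^ 2 := by
        refine integral_congr_ae (Eventually.of_forall fun t => ?_)
        rw [hDdef]
        exact sq_abs _
      rw [hIeq]
      calc (∫ t in Set.Icc (0:ℝ) 1, D t) ^ 2
          ≤ ∫ t in Set.Icc (0:ℝ) 1, D t ^ 2 := h9
        _ = _ := h10
    linarith
  -- outer integral over the covariates
  rw [HAL.L2cube, HAL.L2cube]
  apply Real.sqrt_le_sqrt
  apply integral_mono_of_nonneg
  · exact Eventually.of_forall fun w => integral_nonneg fun t => sq_nonneg _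
  · refine Integrable.mono' (g := fun _ => M ^ 2)
      ((integrableOn_const_iff enorm_ne_top).2 (Or.inr isCompact_Icc.measure_lt_top)) ?_ ?_
    · have hsm : StronglyMeasurable (fun w : Fin d → ℝ =>
          ∫ t, (Fq (t, w) - Fp (t, w)) ^ 2 ∂(volume.restrict (Set.Icc (0:ℝ) 1))) := by
        apply MeasureTheory.StronglyMeasurable.integral_prod_right'
          (f := fun z : (Fin d → ℝ) × ℝ => (Fq (z.2, z.1) - Fp (z.2, z.1)) ^ 2)
        exact (((hFqm.comp (measurable_snd.prodMk measurable_fst)).sub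
          (hFpm.comp (measurable_snd.prodMk measurable_fst))).pow_const 2).stronglyMeasurable
      refine (hsm.aestronglyMeasurable.restrict).congr ?_
      refine ae_restrict_of_forall_mem hWmeas fun w hw => ?_
      refine MeasureTheory.setIntegral_congr_fun measurableSet_Icc fun t ht => ?_
      rw [hhazFq t ht.1 w, hhazFp t ht.1 w]
    · refine ae_restrict_of_forall_mem hWmeas fun w hw => ?_
      rw [Real.norm_eq_abs, abs_of_nonneg (integral_nonneg fun t => sq_nonneg _)]
      have h11 := integral_mono_of_nonneg (μ := volume.restrict (Set.Icc (0:ℝ) 1))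
        (Eventually.of_forall fun t => sq_nonneg (HAL.haz q t w - HAL.haz p t w))
        (integrable_const (M ^ 2))
        (ae_restrict_of_forall_mem measurableSet_Icc fun t ht => by
          have := hdiffM w hw t ht
          calc (HAL.haz q t w - HAL.haz p t w) ^ 2
              = |HAL.haz q t w - HAL.haz p t w| ^ 2 := (sq_abs _).symm
            _ ≤ M ^ 2 := pow_le_pow_left₀ (abs_nonneg _) this 2)
      simpa [integral_const, measure_univ] using h11
  · exact ae_restrict_of_forall_mem hWmeas main
end
end

section
/- Fix an integer d ≥ 1, ε > 0 and M < ∞. Let p, q : [0,1+ε] × [0,1]^{d−1} → [0,∞) be measurable with ∫_0^{1+ε} p(u,w) du = ∫_0^{1+ε} q(u,w) du = 1 for every w ∈ [0,1]^{d−1}. Define S_p(t,w) = 1 − ∫_0^t p(u,w) du and S_q(t,w) = 1 − ∫_0^t q(u,w) du, and the hazards h_p = p/S_p, h_q = q/S_q. Assume S_p(t,w) > 0, S_q(t,w) > 0, h_p(t,w) ≤ M and h_q(t,w) ≤ M for all t ∈ [0,1] and w ∈ [0,1]^{d−1}. Then ‖h_p − h_q‖_λ ≤ (e^M + M·e^{2M})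 · ‖p − q‖_λ. -/
open MeasureTheory Filter Set

noncomputable section

namespace HALaux

lemma bddIntegrableOn {α : Type*} [MeasurableSpace α] {μ : Measure α} {s : Set α}
    (hs : MeasurableSet s) (hμ : μ s ≠ ⊤) {g : α → ℝ} (hg : Measurable g) {C : ℝ}
    (h : ∀ x ∈ s, |g x| ≤ C) : IntegrableOn g s μ := by
  refine Integrable.mono' (g := fun _ => C) (integrableOn_const hμ)
    hg.aestronglyMeasurable ?_
  rw [ae_restrict_iff' hs]
  filter_upwards with x hx
  simpa [Real.norm_eq_abs] using h x hx

lemma surv_lb {f : ℝ → ℝ} {M : ℝ} (hM : 0 ≤ M)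
    (hf : IntervalIntegrable f volume 0 1)
    (hfnn : ∀ u ∈ Icc (0:ℝ) 1, 0 ≤ f u)
    (hfS : ∀ t ∈ Icc (0:ℝ) 1, f t ≤ M * (1 - ∫ u in (0:ℝ)..t, f u)) :
    ∀ t ∈ Icc (0:ℝ) 1, Real.exp (-M) ≤ 1 - ∫ u in (0:ℝ)..t, f u := by
  set S : ℝ → ℝ := fun t => 1 - ∫ u in (0:ℝ)..t, f u with hSdef
  have hint : ∀ s t : ℝ, 0 ≤ s → s ≤ t → t ≤ 1 → IntervalIntegrable f volume s t := by
    intro s t hs hst ht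
    apply hf.mono_set
    rw [uIcc_of_le (by norm_num : (0:ℝ) ≤ 1), uIcc_of_le hst]
    exact Icc_subset_Icc hs ht
  have hadj : ∀ s t : ℝ, 0 ≤ s → s ≤ t → t ≤ 1 → S t = S s - ∫ u in s..t, f u := by
    intro s t hs hst ht
    have := intervalIntegral.integral_add_adjacent_intervals (hint 0 s le_rfl hs (hst.trans ht))
      (hint s t hs hst ht)
    simp only [hSdef]
    linarith [this]
  have hanti : ∀ s t : ℝ, 0 ≤ s → s ≤ t → t ≤ 1 → S t ≤ S s := by
    intro s t hs hst ht
    rw [hadj s t hs hst ht]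
    have : 0 ≤ ∫ u in s..t, f u := by
      apply intervalIntegral.integral_nonneg hst
      intro u hu
      exact hfnn u ⟨le_trans hs hu.1, le_trans hu.2 ht⟩
    linarith
  have hstep : ∀ s t : ℝ, 0 ≤ s → s ≤ t → t ≤ 1 → S s * (1 - M * (t - s)) ≤ S t := by
    intro s t hs hst ht
    have hb : ∫ u in s..t, f u ≤ ∫ u in s..t, (fun _ => M * S s) u := by
      apply intervalIntegral.integral_mono_on hst (hint s t hs hst ht) intervalIntegrable_const
      intro u hu
      have h1 : f u ≤ M * S u := hfS u ⟨le_trans hs hu.1, le_trans hu.2 ht⟩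
      have h2 : S u ≤ S s := hanti s u hs hu.1 (hu.2.trans ht)
      nlinarith
    rw [intervalIntegral.integral_const] at hb
    have := hadj s t hs hst ht
    simp only [smul_eq_mul] at hb
    nlinarith
  have hS0 : S 0 = 1 := by simp [hSdef]
  have hkey : ∀ n : ℕ, 1 ≤ n → M ≤ n → ∀ k : ℕ, k ≤ n → (1 - M / n)^k ≤ S ((k : ℝ) / n) := by
    intro n hn1 hn
    have hn0 : 0 < (n:ℝ) := by exact_mod_cast hn1
    have hMn : 0 ≤ 1 - M / n := by
      rw [sub_nonneg, div_le_one hn0]; exact hn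
    intro k
    induction k with
    | zero => intro _; simp [hS0]
    | succ k ih =>
      intro hk
      have hk' : k ≤ n := Nat.le_of_succ_le hk
      have ihk := ih hk'
      have h0k : (0:ℝ) ≤ (k:ℝ)/n := by positivity
      have hle : (k:ℝ)/n ≤ ((k:ℝ)+1)/n := by gcongr; linarith
      have h1n : ((k:ℝ)+1)/n ≤ 1 := by
        rw [div_le_one hn0]; exact_mod_cast hk
      have hstepk := hstep ((k:ℝ)/n) (((k:ℝ)+1)/n) h0k hle h1n
      have hdiff : M * (((k:ℝ)+1)/n - (k:ℝ)/n) = M / n := by field_simp; ring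
      rw [hdiff] at hstepk
      have : ((k:ℝ)+1) = ((k+1 : ℕ) : ℝ) := by push_cast; ring
      rw [this] at hstepk
      calc (1 - M/n)^(k+1) = (1-M/n)^k * (1-M/n) := pow_succ _ _
        _ ≤ S ((k:ℝ)/n) * (1-M/n) := mul_le_mul_of_nonneg_right ihk hMn
        _ ≤ S (((k+1:ℕ):ℝ)/n) := hstepk
  intro t ht
  refine le_trans ?_ (hanti t 1 ht.1 ht.2 le_rfl)
  refine le_of_tendsto (Real.tendsto_one_add_div_pow_exp (-M)) ?_
  filter_upwards [eventually_ge_atTop (max 1 ⌈M⌉₊)] with n hn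
  have hn1 : 1 ≤ n := le_trans (le_max_left _ _) hn
  have hn0 : (0:ℝ) < n := by exact_mod_cast hn1
  have hMn : M ≤ (n:ℝ) := le_trans (Nat.le_ceil M) (by exact_mod_cast le_trans (le_max_right _ _) hn)
  have hk := hkey n hn1 hMn n le_rfl
  rw [div_self (ne_of_gt hn0)] at hk
  refine le_trans (le_of_eq ?_) hk
  rw [neg_div, ← sub_eq_add_neg]

end HALaux

/-- `‖h_p − h_q‖_λ ≤ (e^M + M e^{2M}) ‖p − q‖_λ`.  (The covariate space
is `[0,1]^d`, so the ambient dimension is `d + 1 ≥ 1`.) -/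
theorem hazard_diff_le_density_diff 
    (d : ℕ) (ε : ℝ) (hε : 0 < ε) (M : ℝ)
    (p q : ℝ → (Fin d → ℝ) → ℝ)
    (hpm : Measurable (Function.uncurry p)) (hqm : Measurable (Function.uncurry q))
    (hpnn : ∀ u ∈ Set.Icc (0:ℝ) (1 + ε), ∀ w ∈ Set.Icc (0 : Fin d → ℝ) 1, 0 ≤ p u w)
    (hqnn : ∀ u ∈ Set.Icc (0:ℝ) (1 + ε), ∀ w ∈ Set.Icc (0 : Fin d → ℝ) 1, 0 ≤ q u w)
    (hpint : ∀ w ∈ Set.Icc (0 : Fin d → ℝ) 1, (∫ u in (0:ℝ)..(1 + ε), p u w) = 1)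
    (hqint : ∀ w ∈ Set.Icc (0 : Fin d → ℝ) 1, (∫ u in (0:ℝ)..(1 + ε), q u w) = 1)
    (hSp : ∀ t ∈ Set.Icc (0:ℝ) 1, ∀ w ∈ Set.Icc (0 : Fin d → ℝ) 1, 0 < HAL.Surv p t w)
    (hSq : ∀ t ∈ Set.Icc (0:ℝ) 1, ∀ w ∈ Set.Icc (0 : Fin d → ℝ) 1, 0 < HAL.Surv q t w)
    (hhp : ∀ t ∈ Set.Icc (0:ℝ) 1, ∀ w ∈ Set.Icc (0 : Fin d → ℝ) 1, HAL.haz p t w ≤ M)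
    (hhq : ∀ t ∈ Set.Icc (0:ℝ) 1, ∀ w ∈ Set.Icc (0 : Fin d → ℝ) 1, HAL.haz q t w ≤ M) :
    HAL.L2cube (fun t w => HAL.haz p t w - HAL.haz q t w) ≤
      (Real.exp M + M * Real.exp (2 * M)) * HAL.L2cube (fun t w => p t w - q t w) := by
  classical
  set W := Set.Icc (0 : Fin d → ℝ) 1 with hWdef
  set T := Set.Icc (0:ℝ) 1 with hTdef
  have h0W : (0 : Fin d → ℝ) ∈ W := ⟨le_refl _, fun i => zero_le_one⟩
  have h0T : (0:ℝ) ∈ T := ⟨le_rfl, zero_le_one⟩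
  -- M is nonnegative
  have hM : 0 ≤ M := by
    have h1 := hhp 0 h0T 0 h0W
    have h2 : 0 ≤ p 0 0 := hpnn 0 ⟨le_rfl, by linarith⟩ 0 h0W
    simp only [HAL.haz, HAL.Surv, intervalIntegral.integral_same, sub_zero, div_one] at h1
    linarith
  set c := M * Real.exp (2 * M) with hcdef
  have hc0 : 0 ≤ c := mul_nonneg hM (Real.exp_pos _).le
  set K := Real.exp M + c with hKdef
  have hK0 : 0 ≤ K := by positivity
  have hTmeas : (volume T).toReal = 1 := by
    simp [hTdef, Real.volume_Icc]
  have hTne : volume T ≠ ⊤ := by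
    rw [hTdef, Real.volume_Icc]; exact ENNReal.ofReal_ne_top
  -- per-w facts
  have SECTION : ∀ w ∈ W,
      ((∫ t in T, (HAL.haz p t w - HAL.haz q t w)^2) ≤ K^2 * ∫ t in T, (p t w - q t w)^2)
        ∧ (∫ t in T, (p t w - q t w)^2) ≤ M^2 := by
    intro w hw
    have fpmeas : Measurable fun t => p t w :=
      hpm.comp (measurable_id.prodMk measurable_const)
    have fqmeas : Measurable fun t => q t w :=
      hqm.comp (measurable_id.prodMk measurable_const)
    have hpI : IntervalIntegrable (fun u => p u w) volume 0 (1+ε) := by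
      by_contra h
      have := hpint w hw
      rw [intervalIntegral.integral_undef h] at this
      norm_num at this
    have hqI : IntervalIntegrable (fun u => q u w) volume 0 (1+ε) := by
      by_contra h
      have := hqint w hw
      rw [intervalIntegral.integral_undef h] at this
      norm_num at this
    have hsub : Set.uIcc (0:ℝ) 1 ⊆ Set.uIcc (0:ℝ) (1+ε) := by
      rw [uIcc_of_le (by norm_num : (0:ℝ) ≤ 1), uIcc_of_le (by linarith : (0:ℝ) ≤ 1+ε)]
      exact Icc_subset_Icc le_rfl (by linarith)
    have hpI1 : IntervalIntegrable (fun u => p u w) volume 0 1 := hpI.mono_set hsub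
    have hqI1 : IntervalIntegrable (fun u => q u w) volume 0 1 := hqI.mono_set hsub
    -- nonnegativity of integral of p up to t
    have hSple : ∀ t ∈ T, HAL.Surv p t w ≤ 1 := by
      intro t ht
      have : 0 ≤ ∫ u in (0:ℝ)..t, p u w := by
        apply intervalIntegral.integral_nonneg ht.1
        intro u hu
        exact hpnn u ⟨hu.1, by linarith [hu.2, ht.2]⟩ w hw
      simp only [HAL.Surv]; linarith
    have hSqle : ∀ t ∈ T, HAL.Surv q t w ≤ 1 := by
      intro t ht
      have : 0 ≤ ∫ u in (0:ℝ)..t, q u w := by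
        apply intervalIntegral.integral_nonneg ht.1
        intro u hu
        exact hqnn u ⟨hu.1, by linarith [hu.2, ht.2]⟩ w hw
      simp only [HAL.Surv]; linarith
    -- p ≤ M * Surv and hence ≤ M
    have hpMS : ∀ t ∈ T, p t w ≤ M * HAL.Surv p t w := by
      intro t ht
      have := hhp t ht w hw
      rw [HAL.haz, div_le_iff₀ (hSp t ht w hw)] at this
      linarith [this]
    have hqMS : ∀ t ∈ T, q t w ≤ M * HAL.Surv q t w := by
      intro t ht
      have := hhq t ht w hw
      rw [HAL.haz, div_le_iff₀ (hSq t ht w hw)] at this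
      linarith [this]
    have hpM : ∀ t ∈ T, p t w ≤ M := by
      intro t ht
      calc p t w ≤ M * HAL.Surv p t w := hpMS t ht
        _ ≤ M * 1 := mul_le_mul_of_nonneg_left (hSple t ht) hM
        _ = M := mul_one M
    have hqM : ∀ t ∈ T, q t w ≤ M := by
      intro t ht
      calc q t w ≤ M * HAL.Surv q t w := hqMS t ht
        _ ≤ M * 1 := mul_le_mul_of_nonneg_left (hSqle t ht) hM
        _ = M := mul_one M
    have hpnn' : ∀ t ∈ T, 0 ≤ p t w := fun t ht =>
      hpnn t ⟨ht.1, by linarith [ht.2]⟩ w hw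
    have hqnn' : ∀ t ∈ T, 0 ≤ q t w := fun t ht =>
      hqnn t ⟨ht.1, by linarith [ht.2]⟩ w hw
    -- survival lower bounds
    have hSpe : ∀ t ∈ T, Real.exp (-M) ≤ HAL.Surv p t w := by
      intro t ht
      exact HALaux.surv_lb hM hpI1 (fun u hu => hpnn' u hu) (fun u hu => hpMS u hu) t ht
    have hSqe : ∀ t ∈ T, Real.exp (-M) ≤ HAL.Surv q t w := by
      intro t ht
      exact HALaux.surv_lb hM hqI1 (fun u hu => hqnn' u hu) (fun u hu => hqMS u hu) t ht
    -- the density difference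
    set pd : ℝ → ℝ := fun t => p t w - q t w with hpddef
    have pdm : Measurable pd := fpmeas.sub fqmeas
    have pdI : IntervalIntegrable pd volume 0 1 := hpI1.sub hqI1
    have pdbd : ∀ t ∈ T, |pd t| ≤ M := by
      intro t ht
      rw [abs_le]
      constructor
      · simp only [hpddef]; linarith [hqM t ht, hpnn' t ht]
      · simp only [hpddef]; linarith [hpM t ht, hqnn' t ht]
    set D : ℝ := ∫ t in T, |pd t| with hDdef
    set a : ℝ := ∫ t in T, (pd t)^2 with hadef
    have ipda : IntegrableOn (fun t => |pd t|) T := by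
      refine HALaux.bddIntegrableOn measurableSet_Icc hTne pdm.abs (C := M) ?_
      intro t ht
      rw [abs_abs]; exact pdbd t ht
    have ipd2 : IntegrableOn (fun t => (pd t)^2) T := by
      refine HALaux.bddIntegrableOn measurableSet_Icc hTne (pdm.pow_const 2) (C := M^2) ?_
      intro t ht
      rw [abs_pow, ← sq_abs]
      exact pow_le_pow_left₀ (abs_nonneg _) (by simpa using pdbd t ht) 2
    have hD0 : 0 ≤ D := setIntegral_nonneg measurableSet_Icc (fun t _ => abs_nonneg _)
    have ha0 : 0 ≤ a := setIntegral_nonneg measurableSet_Icc (fun t _ => sq_nonneg _)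
    -- Cauchy-Schwarz: D^2 ≤ a
    have hDa : D^2 ≤ a := by
      have hnn : 0 ≤ ∫ t in T, (|pd t| - D)^2 :=
        setIntegral_nonneg measurableSet_Icc (fun t _ => sq_nonneg _)
      have hexp : (∫ t in T, (|pd t| - D)^2) = a - 2*D*D + D^2 := by
        have : ∀ t, (|pd t| - D)^2 = (pd t)^2 + (-(2*D))*|pd t| + D^2 := by
          intro t; rw [sub_sq, sq_abs]; ring
        simp only [this]
        rw [integral_add (by exact ipd2.add (ipda.const_mul (-(2*D))))
            (by exact integrableOn_const hTne),
          integral_add (by exact ipd2) (by exact ipda.const_mul (-(2*D))),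
          MeasureTheory.integral_const_mul, setIntegral_const, measureReal_def, hTmeas, smul_eq_mul, one_mul, ← hDdef, ← hadef]
        ring
      nlinarith [hnn, hexp]
    -- D as an interval integral bound for |Surv q - Surv p|
    have hSdiff : ∀ t ∈ T, |HAL.Surv q t w - HAL.Surv p t w| ≤ D := by
      intro t ht
      have heq : HAL.Surv q t w - HAL.Surv p t w = ∫ u in (0:ℝ)..t, pd u := by
        simp only [HAL.Surv, hpddef]
        rw [intervalIntegral.integral_sub (hpI1.mono_set ?hs) (hqI1.mono_set ?hs)]
        · ring
        case hs =>
          rw [uIcc_of_le (by norm_num : (0:ℝ) ≤ 1), uIcc_of_le ht.1]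
          exact Icc_subset_Icc le_rfl ht.2
      rw [heq]
      have pdIt : IntervalIntegrable pd volume 0 t := by
        apply pdI.mono_set
        rw [uIcc_of_le (by norm_num : (0:ℝ) ≤ 1), uIcc_of_le ht.1]
        exact Icc_subset_Icc le_rfl ht.2
      have h1 : |∫ u in (0:ℝ)..t, pd u| ≤ ∫ u in (0:ℝ)..t, |pd u| :=
        intervalIntegral.abs_integral_le_integral_abs ht.1
      have pdIt1 : IntervalIntegrable (fun u => |pd u|) volume t 1 := by
        apply pdI.abs.mono_set
        rw [uIcc_of_le (by norm_num : (0:ℝ) ≤ 1), uIcc_of_le ht.2]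
        exact Icc_subset_Icc ht.1 le_rfl
      have h2 : (∫ u in (0:ℝ)..t, |pd u|) ≤ ∫ u in (0:ℝ)..1, |pd u| := by
        have hadd := intervalIntegral.integral_add_adjacent_intervals
          (pdIt.abs) pdIt1
        have hpos : 0 ≤ ∫ u in t..1, |pd u| :=
          intervalIntegral.integral_nonneg ht.2 (fun u _ => abs_nonneg _)
        linarith
      have h3 : (∫ u in (0:ℝ)..1, |pd u|) = D := by
        rw [intervalIntegral.integral_of_le (by norm_num : (0:ℝ) ≤ 1), hDdef, hTdef,
          integral_Icc_eq_integral_Ioc]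
      linarith [h1, h2, h3.le, h3.ge]
    -- pointwise hazard bound
    have hpt : ∀ t ∈ T, |HAL.haz p t w - HAL.haz q t w| ≤ Real.exp M * |pd t| + c * D := by
      intro t ht
      set A := HAL.Surv p t w with hA
      set B := HAL.Surv q t w with hB
      have hA0 : 0 < A := hSp t ht w hw
      have hB0 : 0 < B := hSq t ht w hw
      have eA : Real.exp (-M) ≤ A := hSpe t ht
      have eB : Real.exp (-M) ≤ B := hSqe t ht
      have hQ0 : 0 ≤ q t w := hqnn' t ht
      have hQM : q t w ≤ M := hqM t ht
      have hkey : HAL.haz p t w - HAL.haz q t w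
          = (pd t)/A + (q t w/(A*B)) * (B - A) := by
        simp only [HAL.haz, hpddef, ← hA, ← hB]
        field_simp
        ring
      have hE : Real.exp M * Real.exp (-M) = 1 := by
        rw [← Real.exp_add]; simp
      have t1 : |pd t| / A ≤ Real.exp M * |pd t| := by
        rw [div_le_iff₀ hA0]
        nlinarith [mul_nonneg (mul_nonneg (Real.exp_pos M).le (abs_nonneg (pd t)))
          (sub_nonneg.mpr eA), hE, abs_nonneg (pd t)]
      have t2 : q t w / (A * B) ≤ c := by
        rw [div_le_iff₀ (mul_pos hA0 hB0)]
        have hAB : Real.exp (-M) * Real.exp (-M) ≤ A * B :=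
          mul_le_mul eA eB (Real.exp_pos _).le hA0.le
        have hcE : c * (Real.exp (-M) * Real.exp (-M)) = M := by
          simp only [hcdef]
          rw [mul_assoc, ← Real.exp_add, ← Real.exp_add]
          have h0 : 2*M + (-M + -M) = 0 := by ring
          rw [h0, Real.exp_zero, mul_one]
        nlinarith [mul_le_mul_of_nonneg_left hAB hc0]
      calc |HAL.haz p t w - HAL.haz q t w|
          ≤ |(pd t)/A| + |(q t w/(A*B)) * (B - A)| := by rw [hkey]; exact abs_add_le _ _
        _ = |pd t|/A + (q t w/(A*B)) * |B - A| := by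
            rw [abs_div, abs_of_pos hA0, abs_mul,
              abs_of_nonneg (div_nonneg hQ0 (mul_pos hA0 hB0).le)]
        _ ≤ Real.exp M * |pd t| + c * |B - A| := by
            refine add_le_add t1 (mul_le_mul_of_nonneg_right t2 (abs_nonneg _))
        _ ≤ Real.exp M * |pd t| + c * D := by
            refine add_le_add le_rfl (mul_le_mul_of_nonneg_left ?_ hc0)
            exact hSdiff t ht
    -- integrate the squared bound
    have step1 : (∫ t in T, (HAL.haz p t w - HAL.haz q t w)^2)
        ≤ ∫ t in T, (Real.exp M * |pd t| + c * D)^2 := by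
      refine integral_mono_of_nonneg (Eventually.of_forall (fun t => sq_nonneg _)) ?_ ?_
      · refine HALaux.bddIntegrableOn measurableSet_Icc hTne ?_ (C := (Real.exp M * M + c*D)^2) ?_
        · exact ((pdm.abs.const_mul _).add_const _).pow_const 2
        · intro t ht
          rw [abs_of_nonneg (sq_nonneg _)]
          refine pow_le_pow_left₀ (by positivity) ?_ 2
          exact add_le_add (mul_le_mul_of_nonneg_left (pdbd t ht) (Real.exp_pos _).le) le_rfl
      · refine (ae_restrict_iff' measurableSet_Icc).mpr ?_
        filter_upwards with t ht
        rw [← sq_abs (HAL.haz p t w - HAL.haz q t w)]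
        exact pow_le_pow_left₀ (abs_nonneg _) (hpt t ht) 2
    have step2 : (∫ t in T, (Real.exp M * |pd t| + c * D)^2)
        = (Real.exp M)^2 * a + (2 * Real.exp M * c * D) * D + (c*D)^2 := by
      have : ∀ t, (Real.exp M * |pd t| + c * D)^2
          = (Real.exp M)^2 * (pd t)^2 + (2 * Real.exp M * c * D) * |pd t| + (c*D)^2 := by
        intro t
        rw [add_sq, mul_pow, sq_abs]
        ring
      simp only [this]
      rw [integral_add (by exact (ipd2.const_mul _).add (ipda.const_mul _))
          (by exact integrableOn_const hTne),
        integral_add (by exact ipd2.const_mul _) (by exact ipda.const_mul _),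
        MeasureTheory.integral_const_mul, MeasureTheory.integral_const_mul, setIntegral_const, measureReal_def, hTmeas, smul_eq_mul, one_mul,
        ← hDdef, ← hadef]
    have step3 : (∫ t in T, (HAL.haz p t w - HAL.haz q t w)^2) ≤ K^2 * a := by
      rw [hKdef]
      nlinarith [step1, step2,
        mul_nonneg (mul_nonneg hc0 (Real.exp_pos M).le) (sub_nonneg.mpr hDa),
        mul_nonneg (mul_nonneg hc0 hc0) (sub_nonneg.mpr hDa)]
    have gbound : a ≤ M^2 := by
      calc a ≤ ∫ _t in T, M^2 := by
            refine setIntegral_mono_on ipd2 (integrableOn_const hTne)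
              measurableSet_Icc ?_
            intro t ht
            rw [← sq_abs]
            exact pow_le_pow_left₀ (abs_nonneg _) (pdbd t ht) 2
        _ = M^2 := by rw [setIntegral_const, measureReal_def, hTmeas, one_smul]
    exact ⟨step3, gbound⟩
  -- outer integral
  have gmeas : Measurable fun w : Fin d → ℝ => ∫ t in T, (p t w - q t w)^2 := by
    have : StronglyMeasurable fun z : (Fin d → ℝ) × ℝ => (p z.2 z.1 - q z.2 z.1)^2 := by
      apply Measurable.stronglyMeasurable
      exact ((hpm.comp measurable_swap).sub (hqm.comp measurable_swap)).pow_const 2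
    exact this.integral_prod_right'.measurable
  have hWne : volume W ≠ ⊤ := by
    rw [hWdef]
    exact (measure_Icc_lt_top).ne
  have outer : (∫ w in W, ∫ t in T, (HAL.haz p t w - HAL.haz q t w)^2)
      ≤ ∫ w in W, K^2 * ∫ t in T, (p t w - q t w)^2 := by
    refine integral_mono_of_nonneg ?_ ?_ ?_
    · exact Eventually.of_forall fun w =>
        setIntegral_nonneg measurableSet_Icc (fun t _ => sq_nonneg _)
    · refine HALaux.bddIntegrableOn measurableSet_Icc hWne (gmeas.const_mul _)
        (C := K^2 * M^2) ?_
      intro w hw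
      have g0 : 0 ≤ ∫ t in T, (p t w - q t w)^2 :=
        setIntegral_nonneg measurableSet_Icc (fun t _ => sq_nonneg _)
      rw [abs_of_nonneg (mul_nonneg (sq_nonneg K) g0)]
      refine mul_le_mul_of_nonneg_left ((SECTION w hw).2) (sq_nonneg K)
    · refine (ae_restrict_iff' measurableSet_Icc).mpr ?_
      filter_upwards with w hw
      exact (SECTION w hw).1
  have final : (∫ w in W, ∫ t in T, (HAL.haz p t w - HAL.haz q t w)^2)
      ≤ K^2 * ∫ w in W, ∫ t in T, (p t w - q t w)^2 := by
    rw [← MeasureTheory.integral_const_mul] at *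
    exact outer
  rw [HAL.L2cube, HAL.L2cube]
  calc Real.sqrt (∫ w in W, ∫ t in T, (HAL.haz p t w - HAL.haz q t w)^2)
      ≤ Real.sqrt (K^2 * ∫ w in W, ∫ t in T, (p t w - q t w)^2) := Real.sqrt_le_sqrt final
    _ = K * Real.sqrt (∫ w in W, ∫ t in T, (p t w - q t w)^2) := by
        rw [Real.sqrt_mul (sq_nonneg K), Real.sqrt_sq hK0]
    _ = (Real.exp M + M * Real.exp (2*M)) * Real.sqrt (∫ w in W, ∫ t in T, (p t w - q t w)^2) := by
        rw [hKdef, hcdef]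
end
end
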